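/- arXiv:2601.13246 — 8 statements merged into one kernel-verified Lean document; each statement's English description precedes it below -/
import Mathlib

section
/- For each k ≥ 1 there is a voting rule E that is not a computable function, yet the k-Winner predicate {(C, V, p) : p ∈ E(C, V) and |E(C, V)| ≤ k} is computable. Concretely, for any set L ⊆ ℕ that is not computable, the voting rule defined by E(C, V) = C if |C| ≤ k or |C| ∈ L, and E(C, V) = ∅ otherwise, is not computable (otherwise L would be decidable), while its k-Winner predicate coincides with {(C, V, p) : p ∈ C and |C| ≤ k}, which is computable. -/
/-!
If the rule were computable, then so would be `n ↦ |E(range n, [])|`, which exceeds `k` exactly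
when `k < n ∈ L`; together with the finite set `L ∩ [0, k]` this decides `L`. On the other hand,
`E(C, V)` has at most `k` elements only when it equals `C`, so the `k`-Winner predicate is just
`p ∈ C ∧ |C| ≤ k`, which is primitive recursive once one unfolds how `Finset ℕ` is encoded.
-/

open scoped Classical

open Denumerable Encodable

namespace Denumerable

/- `Denumerable.finset` codes a finset of naturals by the list of gaps between its consecutive
elements; `raise' · 0` turns such a code back into the sorted list of elements. -/

theorem raise'_eq_map_add (l : List ℕ) (n : ℕ) : raise' l n = (raise' l 0).map (· + n) := by
  induction l generalizing n with
  | nil => rfl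
  | cons m l ih =>
    simp only [raise', ih (m + n + 1), ih (m + 0 + 1), List.map_cons, List.map_map]
    congr 2 with a
    simp only [Function.comp_apply]
    omega

theorem raise'_zero_eq_foldr (l : List ℕ) :
    raise' l 0 = l.foldr (fun m acc => m :: acc.map (· + (m + 1))) [] := by
  induction l with
  | nil => rfl
  | cons m l ih => rw [raise', raise'_eq_map_add, ih]; rfl

theorem raise'_replicate_zero (n m : ℕ) : raise' (List.replicate n 0) m = List.range' m n := by
  induction n generalizing m with
  | zero => rfl
  | succ n ih => simp [List.replicate_succ, raise', ih, List.range'_succ]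

theorem ofNat_finset_nat (k : ℕ) :
    ofNat (Finset ℕ) k = raise'Finset (ofNat (List ℕ) k) 0 := by
  change Finset.map (Equiv.refl ℕ).toEmbedding _ = _
  exact Finset.map_refl

theorem sort_ofNat_finset_nat (k : ℕ) :
    (ofNat (Finset ℕ) k).sort = raise' (ofNat (List ℕ) k) 0 := by
  refine List.Perm.eq_of_sortedLE (Finset.sortedLT_sort _).sortedLE
    (raise'_sorted _ _).sortedLE ?_
  rw [← Multiset.coe_eq_coe, Finset.sort_eq, ofNat_finset_nat]
  rfl

theorem ofNat_encode_replicate_zero (n : ℕ) :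
    ofNat (Finset ℕ) (encode (List.replicate n 0)) = Finset.range n := by
  rw [← Finset.val_inj, ofNat_finset_nat, ofNat_encode]
  simp [raise'Finset, raise'_replicate_zero, Multiset.range, List.range_eq_range']

end Denumerable

namespace Primrec

theorem raise'_zero : Primrec fun l : List ℕ => raise' l 0 := by
  refine (list_foldr (h := fun _ p => p.1 :: p.2.map (· + (p.1 + 1))) .id (const []) ?_).of_eq
    fun l => (raise'_zero_eq_foldr l).symm
  exact to₂ <| list_cons.comp (fst.comp snd) <|
    list_map (snd.comp snd) <| (nat_add.comp snd (succ.comp (fst.comp (snd.comp fst)))).to₂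

theorem nat_finset_sort : Primrec fun s : Finset ℕ => s.sort :=
  ofNat_iff.2 <| (raise'_zero.comp (Primrec.ofNat _)).of_eq fun k =>
    (sort_ofNat_finset_nat k).symm

theorem nat_finset_card : Primrec (Finset.card : Finset ℕ → ℕ) :=
  (list_length.comp nat_finset_sort).of_eq fun _ => Finset.length_sort _

theorem finset_range : Primrec Finset.range :=
  ((Primrec.ofNat _).comp (Primrec.encode.comp (list_map list_range (const 0).to₂))).of_eq
    fun _ => by simp [List.map_const', ofNat_encode_replicate_zero]

end Primrec

theorem PrimrecRel.nat_finset_mem : PrimrecRel fun (a : ℕ) (s : Finset ℕ) => a ∈ s :=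
  (Primrec.eq.exists_mem_list.comp (Primrec.nat_finset_sort.comp .snd) .fst).of_eq fun _ => by
    simp

theorem Set.Finite.primrecPred {α : Type*} [Primcodable α] {s : Set α} (hs : s.Finite) :
    PrimrecPred (· ∈ s) := by
  obtain ⟨t, rfl⟩ := hs.exists_finset_coe
  exact (Primrec.eq.exists_mem_list.comp (Primrec.const t.toList) .id).of_eq fun _ => by simp

protected theorem ComputablePred.or {α : Type*} [Primcodable α] {p q : α → Prop} :
    ComputablePred p → ComputablePred q → ComputablePred fun a => p a ∨ q a
  | ⟨_, hp⟩, ⟨_, hq⟩ =>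
    Computable.computablePred <| Primrec.or.to_comp.comp hp hq |>.of_eq <| by simp

noncomputable def allOrNothingRule (k : ℕ) (L : Set ℕ) (e : Finset ℕ × List (List ℕ)) :
    Finset ℕ :=
  if e.1.card ≤ k ∨ e.1.card ∈ L then e.1 else ∅

section allOrNothingRule

variable (k : ℕ) (L : Set ℕ)

theorem allOrNothingRule_subset (e : Finset ℕ × List (List ℕ)) :
    allOrNothingRule k L e ⊆ e.1 := by
  unfold allOrNothingRule
  split_ifs
  · exact subset_rfl
  · exact Finset.empty_subset _

theorem mem_allOrNothingRule_and_card_le_iff (e : Finset ℕ × List (List ℕ)) (p : ℕ) :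
    p ∈ allOrNothingRule k L e ∧ (allOrNothingRule k L e).card ≤ k ↔
      p ∈ e.1 ∧ e.1.card ≤ k := by
  unfold allOrNothingRule
  split_ifs with h
  · rfl
  · simp [(not_or.1 h).1]

theorem lt_card_allOrNothingRule_range_iff (n : ℕ) :
    k < (allOrNothingRule k L (Finset.range n, [])).card ↔ k < n ∧ n ∈ L := by
  unfold allOrNothingRule
  split_ifs with h <;> simp only [Finset.card_range] at h ⊢ <;> grind

theorem computablePred_of_computable_allOrNothingRule
    (h : Computable (allOrNothingRule k L)) : ComputablePred (· ∈ L) := by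
  have small : ComputablePred (· ∈ L ∩ Set.Iic k) :=
    ((Set.finite_Iic k).inter_of_right L).primrecPred.computablePred
  have large : ComputablePred fun n => k < (allOrNothingRule k L (Finset.range n, [])).card :=
    Computable.computablePred <| (Primrec.nat_lt.decide.to_comp.comp (Computable.const k)
      (Primrec.nat_finset_card.to_comp.comp
        (h.comp (Primrec.finset_range.to_comp.pair (Computable.const [])))))
  -- for `n ≤ k` the rule elects everyone whatever `L` says, hence the finite table `small`
  refine (small.or large).of_eq fun n => ?_
  rw [lt_card_allOrNothingRule_range_iff]
  grind

end allOrNothingRule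

theorem uncomputable_rule_with_computable_k_winner_general
    (k : ℕ) (L : Set ℕ) (hL : ¬ ComputablePred (· ∈ L)) :
    ∃ E : Finset ℕ × List (List ℕ) → Finset ℕ,
      (E = fun e => if e.1.card ≤ k ∨ e.1.card ∈ L then e.1 else ∅) ∧
      (∀ e, E e ⊆ e.1) ∧
      ¬ Computable E ∧
      ComputablePred (fun x : (Finset ℕ × List (List ℕ)) × ℕ =>
        x.2 ∈ E x.1 ∧ (E x.1).card ≤ k) ∧
      (∀ x : (Finset ℕ × List (List ℕ)) × ℕ,
        (x.2 ∈ E x.1 ∧ (E x.1).card ≤ k) ↔ (x.2 ∈ x.1.1 ∧ x.1.1.card ≤ k)) := by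
  have kWinner : PrimrecPred fun x : (Finset ℕ × List (List ℕ)) × ℕ =>
      x.2 ∈ x.1.1 ∧ x.1.1.card ≤ k :=
    (PrimrecRel.nat_finset_mem.comp .snd (Primrec.fst.comp .fst)).and
      (Primrec.nat_le.comp (Primrec.nat_finset_card.comp (Primrec.fst.comp .fst)) (.const k))
  refine ⟨allOrNothingRule k L, rfl, allOrNothingRule_subset k L,
    fun h => hL (computablePred_of_computable_allOrNothingRule k L h),
    kWinner.computablePred.of_eq fun x => ?_,
    fun x => mem_allOrNothingRule_and_card_le_iff k L x.1 x.2⟩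
  exact (mem_allOrNothingRule_and_card_le_iff k L x.1 x.2).symm

/-- Proposition 5: for each `k ≥ 1` and each noncomputable set `L ⊆ ℕ`,
the voting rule `E` on elections `(C, V)` (with candidates drawn from `ℕ` and votes encoded
as lists) defined by `E (C, V) = C` if `|C| ≤ k` or `|C| ∈ L`, and `E (C, V) = ∅` otherwise,
is not a computable function, yet its `k`-Winner predicate
`{(C, V, p) : p ∈ E (C, V) ∧ |E (C, V)| ≤ k}` is computable. -/
theorem uncomputable_rule_with_computable_k_winner
    (k : ℕ) (hk : 1 ≤ k) (L : Set ℕ) (hL : ¬ ComputablePred (· ∈ L)) :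
    ∃ E : Finset ℕ × List (List ℕ) → Finset ℕ,
      (E = fun e => if e.1.card ≤ k ∨ e.1.card ∈ L then e.1 else ∅) ∧
      (∀ e, E e ⊆ e.1) ∧
      ¬ Computable E ∧
      ComputablePred (fun x : (Finset ℕ × List (List ℕ)) × ℕ =>
        x.2 ∈ E x.1 ∧ (E x.1).card ≤ k) ∧
      (∀ x : (Finset ℕ × List (List ℕ)) × ℕ,
        (x.2 ∈ E x.1 ∧ (E x.1).card ≤ k) ↔ (x.2 ∈ x.1.1 ∧ x.1.1.card ≤ k)) :=
  uncomputable_rule_with_computable_k_winner_general k L hL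
end

section
/- Let E be any voting rule and let (D_1, …, D_k, A) be a recampaigning instance. Then it is a Yes-instance of E-CRC_1 if and only if there is an injective map g : A → {1, …, k} such that for every a ∈ A, E(C_{g(a)} ∪ {a}, V_{g(a)}) = {a}. Equivalently, in the bipartite graph with parts A and {1, …, k} and an edge between a and i exactly when E(C_i ∪ {a}, V_i) = {a}, there is a matching saturating A. -/
open Finset

variable {Cand Prof : Type*}

/-- `assignedTo A g i` is the set `A_i` of additional candidates assigned to district `i`
by the assignment `g : A → {1, …, k}`. -/
def assignedTo [DecidableEq Cand] {k : ℕ} (A : Finset Cand)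
    (g : {a // a ∈ A} → Fin k) (i : Fin k) : Finset Cand :=
  (A.attach.filter fun a => g a = i).image Subtype.val

/-- Yes-instance of unbounded constructive recampaigning (`E`-CRC). -/
def YesCRC [DecidableEq Cand] (E : Finset Cand → Prof → Finset Cand) {k : ℕ}
    (C : Fin k → Finset Cand) (V : Fin k → Prof) (A : Finset Cand) : Prop :=
  ∃ g : {a // a ∈ A} → Fin k,
    ∀ a : {a // a ∈ A}, (a : Cand) ∈ E (C (g a) ∪ assignedTo A g (g a)) (V (g a))

/-- Yes-instance of bounded constructive recampaigning (`E`-CRC_ℓ). -/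
def YesCRCB [DecidableEq Cand] (E : Finset Cand → Prof → Finset Cand) (ℓ : ℕ) {k : ℕ}
    (C : Fin k → Finset Cand) (V : Fin k → Prof) (A : Finset Cand) : Prop :=
  ∃ g : {a // a ∈ A} → Fin k,
    (∀ a : {a // a ∈ A}, (a : Cand) ∈ E (C (g a) ∪ assignedTo A g (g a)) (V (g a))) ∧
    ∀ i : Fin k, (assignedTo A g i).Nonempty →
      (E (C i ∪ assignedTo A g i) (V i)).card ≤ ℓ

/-- Yes-instance of priced unbounded constructive recampaigning (`E`-$CRC). -/
def YesPCRC [DecidableEq Cand] (E : Finset Cand → Prof → Finset Cand) {k : ℕ}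
    (C : Fin k → Finset Cand) (V : Fin k → Prof) (A : Finset Cand)
    (π : Fin k → Cand → ℕ+) (B : ℕ) : Prop :=
  ∃ g : {a // a ∈ A} → Fin k,
    (∀ a : {a // a ∈ A}, (a : Cand) ∈ E (C (g a) ∪ assignedTo A g (g a)) (V (g a))) ∧
    (∑ a ∈ A.attach, (π (g a) a : ℕ)) ≤ B

/-- Yes-instance of priced bounded constructive recampaigning (`E`-$CRC_ℓ). -/
def YesPCRCB [DecidableEq Cand] (E : Finset Cand → Prof → Finset Cand) (ℓ : ℕ) {k : ℕ}
    (C : Fin k → Finset Cand) (V : Fin k → Prof) (A : Finset Cand)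
    (π : Fin k → Cand → ℕ+) (B : ℕ) : Prop :=
  ∃ g : {a // a ∈ A} → Fin k,
    (∀ a : {a // a ∈ A}, (a : Cand) ∈ E (C (g a) ∪ assignedTo A g (g a)) (V (g a))) ∧
    (∀ i : Fin k, (assignedTo A g i).Nonempty →
      (E (C i ∪ assignedTo A g i) (V i)).card ≤ ℓ) ∧
    (∑ a ∈ A.attach, (π (g a) a : ℕ)) ≤ B

lemma mem_assignedTo [DecidableEq Cand] {k : ℕ} {A : Finset Cand}
    {g : {a // a ∈ A} → Fin k} {i : Fin k} {x : Cand} :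
    x ∈ assignedTo A g i ↔ ∃ h : x ∈ A, g ⟨x, h⟩ = i := by
  simp only [assignedTo, Finset.mem_image, Finset.mem_filter, Finset.mem_attach, true_and]
  constructor
  · rintro ⟨⟨y, hy⟩, hgy, rfl⟩; exact ⟨hy, hgy⟩
  · rintro ⟨h, hg⟩; exact ⟨⟨x, h⟩, hg, rfl⟩

lemma assignedTo_eq_singleton [DecidableEq Cand] {k : ℕ} {A : Finset Cand}
    {g : {a // a ∈ A} → Fin k} (hinj : Function.Injective g) (a : {a // a ∈ A}) :
    assignedTo A g (g a) = {(a : Cand)} := by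
  ext x
  rw [mem_assignedTo, Finset.mem_singleton]
  constructor
  · rintro ⟨h, hg⟩; exact congrArg Subtype.val (hinj hg)
  · rintro rfl; exact ⟨a.2, by rw [Subtype.coe_eta]⟩

/-- from Lemma 1 / Theorem 2: a recampaigning instance is a Yes-instance of
`E`-CRC_1 if and only if there is an injective assignment `g : A → {1, …, k}` (a matching of
`A` into the districts, along edges `{(a, i) : E (C_i ∪ {a}, V_i) = {a}}`) such that each
`a ∈ A` is the unique winner of the district it is assigned to. -/
theorem crc_one_iff_matching [DecidableEq Cand]
    (E : Finset Cand → Prof → Finset Cand) (hE : ∀ C V, E C V ⊆ C)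
    {k : ℕ} (C : Fin k → Finset Cand) (V : Fin k → Prof) (A : Finset Cand)
    (hdisj : ∀ i, Disjoint (C i) A) :
    YesCRCB E 1 C V A ↔
      ∃ g : {a // a ∈ A} → Fin k, Function.Injective g ∧
        ∀ a : {a // a ∈ A},
          E (C (g a) ∪ {(a : Cand)}) (V (g a)) = {(a : Cand)} := by
  constructor
  · rintro ⟨g, hwin, hcard⟩
    have hinj : Function.Injective g := by
      intro a b hab
      have ha := hwin a
      have hb := hwin b
      rw [hab] at ha
      have hne : (assignedTo A g (g b)).Nonempty :=
        ⟨b, mem_assignedTo.mpr ⟨b.2, by rw [Subtype.coe_eta]⟩⟩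
      have h1 := hcard (g b) hne
      exact Subtype.ext (Finset.card_le_one.mp h1 _ ha _ hb)
    refine ⟨g, hinj, fun a => ?_⟩
    have hA := assignedTo_eq_singleton hinj a
    have ha := hwin a
    have hne : (assignedTo A g (g a)).Nonempty := ⟨a, hA ▸ Finset.mem_singleton_self _⟩
    have h1 := hcard (g a) hne
    rw [hA] at ha h1
    exact (Finset.eq_singleton_iff_unique_mem.mpr
      ⟨ha, fun y hy => Finset.card_le_one.mp h1 _ hy _ ha⟩)
  · rintro ⟨g, hinj, hsing⟩
    refine ⟨g, fun a => ?_, fun i hne => ?_⟩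
    · rw [assignedTo_eq_singleton hinj a, hsing a]
      exact Finset.mem_singleton_self _
    · obtain ⟨x, hx⟩ := hne
      obtain ⟨h, hg⟩ := mem_assignedTo.mp hx
      subst hg
      rw [assignedTo_eq_singleton hinj ⟨x, h⟩, hsing ⟨x, h⟩]
      simp
end

section
/- Let E be any voting rule and let (D_1, …, D_k, A, π, B) be a priced recampaigning instance. Then it is a Yes-instance of E-$CRC_1 if and only if there is an injective map g : A → {1, …, k} such that for every a ∈ A, E(C_{g(a)} ∪ {a}, V_{g(a)}) = {a}, and Σ_{a ∈ A} π(g(a), a) ≤ B. Equivalently, in the bipartite graph with parts A and {1, …, k}, edges {(a, i) : E(C_i ∪ {a}, V_i) = {a}}, and edge weights π(i, a), there is a matching saturating A of total weight at most B. -/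
open Finset

variable {Cand Prof : Type*}

lemma assignedTo_of_inj [DecidableEq Cand] {k : ℕ} {A : Finset Cand}
    {g : {a // a ∈ A} → Fin k} (hg : Function.Injective g) (a : {a // a ∈ A}) :
    assignedTo A g (g a) = {(a : Cand)} := by
  ext x
  rw [mem_assignedTo, Finset.mem_singleton]
  constructor
  · rintro ⟨h, hgi⟩
    exact congrArg Subtype.val (hg hgi)
  · rintro rfl
    exact ⟨a.2, congrArg g (Subtype.ext rfl)⟩

/-- from Lemma 1, priced version: a priced recampaigning instance is a
Yes-instance of `E`-$CRC_1 if and only if there is an injective assignment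
`g : A → {1, …, k}` such that each `a ∈ A` is the unique winner of its district and the total
price `Σ_{a ∈ A} π (g a, a)` is at most the budget `B` (a matching of `A` into the districts
of total weight at most `B`). -/
theorem priced_crc_one_iff_matching [DecidableEq Cand]
    (E : Finset Cand → Prof → Finset Cand) (hE : ∀ C V, E C V ⊆ C)
    {k : ℕ} (C : Fin k → Finset Cand) (V : Fin k → Prof) (A : Finset Cand)
    (hdisj : ∀ i, Disjoint (C i) A)
    (π : Fin k → Cand → ℕ+) (B : ℕ) :
    YesPCRCB E 1 C V A π B ↔
      ∃ g : {a // a ∈ A} → Fin k, Function.Injective g ∧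
        (∀ a : {a // a ∈ A},
          E (C (g a) ∪ {(a : Cand)}) (V (g a)) = {(a : Cand)}) ∧
        (∑ a ∈ A.attach, (π (g a) a : ℕ)) ≤ B := by
  constructor
  · rintro ⟨g, hwin, hcard, hB⟩
    have hinj : Function.Injective g := by
      intro a b hab
      have hne : (assignedTo A g (g a)).Nonempty :=
        ⟨a, mem_assignedTo.2 ⟨a.2, congrArg g (Subtype.ext rfl)⟩⟩
      have hc := hcard (g a) hne
      have ha : (a : Cand) ∈ E (C (g a) ∪ assignedTo A g (g a)) (V (g a)) := hwin a
      have hb : (b : Cand) ∈ E (C (g a) ∪ assignedTo A g (g a)) (V (g a)) := by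
        have := hwin b; rwa [← hab] at this
      exact Subtype.ext (Finset.card_le_one.1 hc _ ha _ hb)
    refine ⟨g, hinj, fun a => ?_, hB⟩
    have hA := assignedTo_of_inj hinj a
    have ha := hwin a
    rw [hA] at ha
    have hne : (assignedTo A g (g a)).Nonempty := by
      rw [hA]; exact ⟨a, Finset.mem_singleton_self _⟩
    have hc := hcard (g a) hne
    rw [hA] at hc
    exact Finset.eq_singleton_iff_unique_mem.2
      ⟨ha, fun x hx => Finset.card_le_one.1 hc _ hx _ ha⟩
  · rintro ⟨g, hinj, heq, hB⟩
    refine ⟨g, fun a => ?_, fun i hne => ?_, hB⟩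
    · rw [assignedTo_of_inj hinj a, heq a]
      exact Finset.mem_singleton_self _
    · obtain ⟨x, hx⟩ := hne
      obtain ⟨h, rfl⟩ := mem_assignedTo.1 hx
      rw [assignedTo_of_inj hinj ⟨x, h⟩, heq ⟨x, h⟩]
      simp
end

section
/- Let W, X, Y be pairwise disjoint finite sets with |W| = |X| = |Y|, let S ⊆ W × X × Y, and let w ∈ W, x ∈ X, y ∈ Y. Let w', x', y' be three distinct fresh elements not in W ∪ X ∪ Y, and set W' = W ∪ {w'}, X' = X ∪ {x'}, Y' = Y ∪ {y'}, and S' = S ∪ {(w, x', y'), (w', x, y'), (w', x', y), (w', x', y')}. Then (W, X, Y, S) has a perfect 3-dimensional matching if and only if (W', X', Y', S') has a perfect 3-dimensional matching. -/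
open Finset

/-- A perfect 3-dimensional matching for the instance `(W, X, Y, S)`: a subset `M ⊆ S` with
`|M| = |W|` such that no two distinct triples of `M` agree in any coordinate. -/
def Has3DM {α : Type*} (W : Finset α) (S : Finset (α × α × α)) : Prop :=
  ∃ M ⊆ S, M.card = W.card ∧
    ∀ u ∈ M, ∀ v ∈ M, u ≠ v → u.1 ≠ v.1 ∧ u.2.1 ≠ v.2.1 ∧ u.2.2 ≠ v.2.2

/-- gadget step of Proposition 6, NP-completeness of Exactly-3-3DM:
adding fresh elements `w', x', y'` together with the four triples
`(w, x', y'), (w', x, y'), (w', x', y), (w', x', y')` preserves the existence of a perfect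
3-dimensional matching, in both directions. -/
theorem exactly3_3dm_gadget {α : Type*} [DecidableEq α]
    (W X Y : Finset α) (S : Finset (α × α × α))
    (hWX : Disjoint W X) (hWY : Disjoint W Y) (hXY : Disjoint X Y)
    (hcard₁ : W.card = X.card) (hcard₂ : X.card = Y.card)
    (hS : ∀ u ∈ S, u.1 ∈ W ∧ u.2.1 ∈ X ∧ u.2.2 ∈ Y)
    (w x y : α) (hw : w ∈ W) (hx : x ∈ X) (hy : y ∈ Y)
    (w' x' y' : α)
    (hd₁ : w' ≠ x') (hd₂ : w' ≠ y') (hd₃ : x' ≠ y')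
    (hw' : w' ∉ W ∪ X ∪ Y) (hx' : x' ∉ W ∪ X ∪ Y) (hy' : y' ∉ W ∪ X ∪ Y) :
    Has3DM W S ↔
      Has3DM (insert w' W)
        (S ∪ {(w, x', y'), (w', x, y'), (w', x', y), (w', x', y')}) := by
  simp only [Finset.mem_union, not_or] at hw' hx' hy'
  obtain ⟨⟨hw'W, hw'X⟩, hw'Y⟩ := hw'
  obtain ⟨⟨hx'W, hx'X⟩, hx'Y⟩ := hx'
  obtain ⟨⟨hy'W, hy'X⟩, hy'Y⟩ := hy'
  constructor
  · rintro ⟨M, hMS, hMcard, hM⟩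
    refine ⟨insert (w', x', y') M, ?_, ?_, ?_⟩
    · apply Finset.insert_subset
      · simp
      · exact hMS.trans Finset.subset_union_left
    · rw [Finset.card_insert_of_notMem, Finset.card_insert_of_notMem hw'W, hMcard]
      intro h
      exact hw'W (hS _ (hMS h)).1
    · intro u hu v hv huv
      rcases Finset.mem_insert.1 hu with rfl | hu <;>
        rcases Finset.mem_insert.1 hv with rfl | hv
      · exact absurd rfl huv
      · obtain ⟨h1, h2, h3⟩ := hS v (hMS hv)
        exact ⟨fun h => hw'W (by rw [show w' = v.1 from h]; exact h1),
               fun h => hx'X (by rw [show x' = v.2.1 from h]; exact h2),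
               fun h => hy'Y (by rw [show y' = v.2.2 from h]; exact h3)⟩
      · obtain ⟨h1, h2, h3⟩ := hS u (hMS hu)
        exact ⟨fun h => hw'W (by rw [← show u.1 = w' from h]; exact h1),
               fun h => hx'X (by rw [← show u.2.1 = x' from h]; exact h2),
               fun h => hy'Y (by rw [← show u.2.2 = y' from h]; exact h3)⟩
      · exact hM u hu v hv huv
  · rintro ⟨M, hMS, hMcard, hM⟩
    have hmem : ∀ u ∈ M, u ∈ S ∨ u = (w, x', y') ∨ u = (w', x, y') ∨
        u = (w', x', y) ∨ u = (w', x', y') := by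
      intro u hu
      have := hMS hu
      simp only [Finset.mem_union, Finset.mem_insert, Finset.mem_singleton] at this
      tauto
    set N : Finset (α × α × α) := M.filter (fun u => u ∉ S) with hN
    have hNcard : N.card ≤ 1 := by
      rw [Finset.card_le_one]
      intro a ha b hb
      rw [hN, Finset.mem_filter] at ha hb
      by_contra hab
      obtain ⟨h1, h2, h3⟩ := hM a ha.1 b hb.1 hab
      rcases hmem a ha.1 with h | rfl | rfl | rfl | rfl
      · exact ha.2 h
      all_goals rcases hmem b hb.1 with h | rfl | rfl | rfl | rfl
      all_goals first
        | exact hb.2 h | exact hab rfl | exact h1 rfl | exact h2 rfl | exact h3 rfl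
    have hWcard : M.card = W.card + 1 := by
      rw [hMcard, Finset.card_insert_of_notMem hw'W]
    have hNne : N.Nonempty := by
      rw [hN, Finset.filter_nonempty_iff]
      by_contra h
      push_neg at h
      have hinj : Set.InjOn Prod.fst (M : Set (α × α × α)) := by
        intro a ha b hb hab
        by_contra hne
        exact (hM a ha b hb hne).1 hab
      have hci : (M.image Prod.fst).card = M.card := Finset.card_image_of_injOn hinj
      have himg : M.image Prod.fst ⊆ W := by
        intro z hz
        obtain ⟨u, hu, rfl⟩ := Finset.mem_image.1 hz
        exact (hS u (h u hu)).1
      have := Finset.card_le_card himg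
      omega
    have hN1 : N.card = 1 := le_antisymm hNcard (Finset.card_pos.2 hNne)
    refine ⟨M \ N, ?_, ?_, ?_⟩
    · intro u hu
      rw [Finset.mem_sdiff, hN, Finset.mem_filter] at hu
      by_contra h
      exact hu.2 ⟨hu.1, h⟩
    · rw [Finset.card_sdiff_of_subset (Finset.filter_subset _ _), hN1, hWcard]
      omega
    · intro u hu v hv huv
      exact hM u (Finset.mem_sdiff.1 hu).1 v (Finset.mem_sdiff.1 hv).1 huv
end

section
/- Define the voting rule E₁ by E₁(C, V) = C if |C| = 3 and E₁(C, V) = ∅ otherwise. Consider an E₁-CRC_3 instance with districts D_1, …, D_k (with candidate sets C_1, …, C_k) and additional candidate set A, and for j ∈ {1, 2, 3} let N_j = |{i ∈ {1,…,k} : |C_i| = 3 − j}|. Then the instance is a Yes-instance of E₁-CRC_3 if and only if there exist natural numbers α ≤ N_1, β ≤ N_2, γ ≤ N_3 with α + 2β + 3γ = |A|. -/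
open Finset

variable {Cand Prof : Type*}

lemma my_exists_fiber_card [DecidableEq Cand] {k : ℕ} (A : Finset Cand) (w : Fin k → ℕ)
    (h : ∑ i, w i = A.card) :
    ∃ g : {a // a ∈ A} → Fin k, ∀ i, (A.attach.filter fun a => g a = i).card = w i := by
  have hcard : Fintype.card (Σ i : Fin k, Fin (w i)) = Fintype.card {a // a ∈ A} := by
    simp [Fintype.card_coe, h]
  obtain ⟨e⟩ := Fintype.card_eq.mp hcard
  refine ⟨fun a => (e.symm a).1, fun i => ?_⟩
  rw [← Finset.univ_eq_attach, ← Fintype.card_subtype]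
  have e2 : {a : {x // x ∈ A} // (e.symm a).1 = i} ≃ {x : Σ j : Fin k, Fin (w j) // x.1 = i} :=
    Equiv.subtypeEquiv e.symm (fun a => Iff.rfl)
  have e3 : {x : Σ j : Fin k, Fin (w j) // x.1 = i} ≃ Fin (w i) :=
    { toFun := fun x => Fin.cast (congrArg w x.2) x.1.2
      invFun := fun y => ⟨⟨i, y⟩, rfl⟩
      left_inv := by rintro ⟨⟨j, y⟩, h⟩; subst h; rfl
      right_inv := fun y => rfl }
  rw [Fintype.card_congr (e2.trans e3), Fintype.card_fin]

lemma my_assignedTo_subset [DecidableEq Cand] {k : ℕ} (A : Finset Cand)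
    (g : {a // a ∈ A} → Fin k) (i : Fin k) : assignedTo A g i ⊆ A := by
  intro x hx
  simp only [assignedTo, mem_image, mem_filter] at hx
  obtain ⟨b, -, rfl⟩ := hx
  exact b.2

lemma my_card_assignedTo [DecidableEq Cand] {k : ℕ} (A : Finset Cand)
    (g : {a // a ∈ A} → Fin k) (i : Fin k) :
    (assignedTo A g i).card = (A.attach.filter fun a => g a = i).card :=
  Finset.card_image_of_injective _ Subtype.val_injective

lemma my_mem_assignedTo_self [DecidableEq Cand] {k : ℕ} (A : Finset Cand)
    (g : {a // a ∈ A} → Fin k) (a : {a // a ∈ A}) :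
    (a : Cand) ∈ assignedTo A g (g a) := by
  simp only [assignedTo, mem_image, mem_filter]
  exact ⟨a, ⟨mem_attach _ _, rfl⟩, rfl⟩

lemma my_sum_ite_card {k : ℕ} (p : Fin k → Prop) [DecidablePred p] (c : ℕ) :
    ∑ i, (if p i then c else 0) = c * (univ.filter p).card := by
  rw [← Finset.sum_filter, Finset.sum_const, smul_eq_mul, mul_comm]

/-- polynomial-time algorithm of Proposition 4, (1) ⟹ (2): for the voting
rule `E₁` with `E₁ (C, V) = C` if `|C| = 3` and `E₁ (C, V) = ∅` otherwise, an instance with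
districts `D_1, …, D_k` and additional candidates `A` is a Yes-instance of `E₁`-CRC_3 if and
only if there are `α ≤ N₁`, `β ≤ N₂`, `γ ≤ N₃` with `α + 2β + 3γ = |A|`, where `N_j` is the
number of districts with exactly `3 − j` candidates. -/
theorem e_one_crc_three_characterization [DecidableEq Cand]
    {k : ℕ} (C : Fin k → Finset Cand) (V : Fin k → Prof) (A : Finset Cand)
    (hdisj : ∀ i, Disjoint (C i) A) :
    YesCRCB (fun (C' : Finset Cand) (_ : Prof) => if C'.card = 3 then C' else ∅) 3
        C V A ↔
      ∃ α β γ : ℕ,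
        α ≤ (Finset.univ.filter fun i : Fin k => (C i).card = 3 - 1).card ∧
        β ≤ (Finset.univ.filter fun i : Fin k => (C i).card = 3 - 2).card ∧
        γ ≤ (Finset.univ.filter fun i : Fin k => (C i).card = 3 - 3).card ∧
        α + 2 * β + 3 * γ = A.card := by
  unfold YesCRCB
  constructor
  · rintro ⟨g, hg, -⟩
    have hdis : ∀ i, Disjoint (C i) (assignedTo A g i) :=
      fun i => (hdisj i).mono_right (my_assignedTo_subset A g i)
    have hkey : ∀ i, (assignedTo A g i).Nonempty →
        (C i).card + (assignedTo A g i).card = 3 := by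
      rintro i ⟨x, hx⟩
      simp only [assignedTo, mem_image, mem_filter] at hx
      obtain ⟨a, ⟨-, ha⟩, rfl⟩ := hx
      have h := hg a
      simp only at h
      rw [ha] at h
      by_cases h3 : (C i ∪ assignedTo A g i).card = 3
      · rw [card_union_of_disjoint (hdis i)] at h3; exact h3
      · rw [if_neg h3] at h; exact absurd h (Finset.notMem_empty _)
    have hle : ∀ i, (assignedTo A g i).card ≤ 3 := by
      intro i
      rcases Nat.eq_zero_or_pos (assignedTo A g i).card with h | h
      · omega
      · have := hkey i (Finset.card_pos.mp h); omega
    have hsum : ∑ i, (assignedTo A g i).card = A.card := by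
      calc ∑ i, (assignedTo A g i).card
          = ∑ i, (A.attach.filter fun a => g a = i).card := by
            exact Finset.sum_congr rfl fun i _ => my_card_assignedTo A g i
        _ = A.attach.card :=
            (Finset.card_eq_sum_card_fiberwise fun a _ => Finset.mem_univ (g a)).symm
        _ = A.card := Finset.card_attach
    refine ⟨(univ.filter fun i => (assignedTo A g i).card = 1).card,
            (univ.filter fun i => (assignedTo A g i).card = 2).card,
            (univ.filter fun i => (assignedTo A g i).card = 3).card, ?_, ?_, ?_, ?_⟩
    · apply Finset.card_le_card
      intro i hi
      simp only [mem_filter, mem_univ, true_and] at hi ⊢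
      have := hkey i (Finset.card_pos.mp (by omega))
      omega
    · apply Finset.card_le_card
      intro i hi
      simp only [mem_filter, mem_univ, true_and] at hi ⊢
      have := hkey i (Finset.card_pos.mp (by omega))
      omega
    · apply Finset.card_le_card
      intro i hi
      simp only [mem_filter, mem_univ, true_and] at hi ⊢
      have := hkey i (Finset.card_pos.mp (by omega))
      omega
    · have hpt : ∀ i, (assignedTo A g i).card =
          (if (assignedTo A g i).card = 1 then 1 else 0) +
          (if (assignedTo A g i).card = 2 then 2 else 0) +
          (if (assignedTo A g i).card = 3 then 3 else 0) := by
        intro i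
        have h := hle i
        have : (assignedTo A g i).card = 0 ∨ (assignedTo A g i).card = 1 ∨
            (assignedTo A g i).card = 2 ∨ (assignedTo A g i).card = 3 := by omega
        rcases this with h' | h' | h' | h' <;> simp [h']
      rw [← hsum, Finset.sum_congr rfl fun i _ => hpt i, Finset.sum_add_distrib,
        Finset.sum_add_distrib, my_sum_ite_card, my_sum_ite_card, my_sum_ite_card]
      ring
  · rintro ⟨α, β, γ, hα, hβ, hγ, hsum⟩
    obtain ⟨S₁, hS₁sub, hS₁⟩ := Finset.exists_subset_card_eq hα
    obtain ⟨S₂, hS₂sub, hS₂⟩ := Finset.exists_subset_card_eq hβ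
    obtain ⟨S₃, hS₃sub, hS₃⟩ := Finset.exists_subset_card_eq hγ
    have hc1 : ∀ i ∈ S₁, (C i).card = 2 := by
      intro i hi; have := hS₁sub hi; simp only [mem_filter] at this; omega
    have hc2 : ∀ i ∈ S₂, (C i).card = 1 := by
      intro i hi; have := hS₂sub hi; simp only [mem_filter] at this; omega
    have hc3 : ∀ i ∈ S₃, (C i).card = 0 := by
      intro i hi; have := hS₃sub hi; simp only [mem_filter] at this; omega
    set w : Fin k → ℕ := fun i =>
      if i ∈ S₁ then 1 else if i ∈ S₂ then 2 else if i ∈ S₃ then 3 else 0 with hw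
    have hpt : ∀ i, w i = (if i ∈ S₁ then 1 else 0) + (if i ∈ S₂ then 2 else 0) +
        (if i ∈ S₃ then 3 else 0) := by
      intro i
      by_cases h1 : i ∈ S₁ <;> by_cases h2 : i ∈ S₂ <;> by_cases h3 : i ∈ S₃ <;>
        first
        | (exfalso;
           first
           | exact absurd ((hc1 i h1).symm.trans (hc2 i h2)) (by norm_num)
           | exact absurd ((hc1 i h1).symm.trans (hc3 i h3)) (by norm_num)
           | exact absurd ((hc2 i h2).symm.trans (hc3 i h3)) (by norm_num))
        | simp [hw, h1, h2, h3]
    have hwsum : ∑ i, w i = A.card := by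
      rw [Finset.sum_congr rfl fun i _ => hpt i, Finset.sum_add_distrib,
        Finset.sum_add_distrib, my_sum_ite_card, my_sum_ite_card, my_sum_ite_card]
      simp only [Finset.filter_mem_eq_inter, Finset.univ_inter]
      rw [hS₁, hS₂, hS₃, ← hsum]; ring
    obtain ⟨g, hg⟩ := my_exists_fiber_card A w hwsum
    have hcardA : ∀ i, (assignedTo A g i).card = w i := fun i =>
      (my_card_assignedTo A g i).trans (hg i)
    have hdis : ∀ i, Disjoint (C i) (assignedTo A g i) :=
      fun i => (hdisj i).mono_right (my_assignedTo_subset A g i)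
    have hthree : ∀ i, w i ≠ 0 → (C i ∪ assignedTo A g i).card = 3 := by
      intro i hi
      rw [card_union_of_disjoint (hdis i), hcardA]
      by_cases h1 : i ∈ S₁
      · have := hc1 i h1; simp only [hw, if_pos h1]; omega
      · by_cases h2 : i ∈ S₂
        · have := hc2 i h2; simp only [hw, if_neg h1, if_pos h2]; omega
        · by_cases h3 : i ∈ S₃
          · have := hc3 i h3; simp only [hw, if_neg h1, if_neg h2, if_pos h3]; omega
          · exact absurd (by simp [hw, h1, h2, h3]) hi
    refine ⟨g, ?_, ?_⟩
    · intro a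
      have hmem := my_mem_assignedTo_self A g a
      have hne : w (g a) ≠ 0 := by
        rw [← hcardA]; exact Finset.card_ne_zero_of_mem hmem
      simp only [if_pos (hthree (g a) hne)]
      exact Finset.mem_union_right _ hmem
    · intro i _
      simp only
      split
      · next h => omega
      · simp
end

section
/- Let W and X be disjoint finite sets of candidates with A = W ∪ X, and let T ⊆ W × X be a set of exactly 3 distinct pairs. Then there exists a nonempty finite profile V of votes (linear orders on the candidate type) such that for all distinct a, b ∈ A, the 1-approval winner set of the election ({a, b}, V) equals {a, b} if and only if (a, b) ∈ T or (b, a) ∈ T. -/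
/-!
In the election `({a, b}, V)` the two candidates tie under 1-approval exactly when as many votes
rank `a` above `b` as `b` above `a`. Two copies of a fixed linear order `L` give every pair a
margin of `±2`. To make a pair `{p, q}` tie, add two votes that both rank the `L`-worse of the two
directly above the other and are reverses of each other on every other pair: this shifts the
margin of `{p, q}` by `2` against `L` and leaves all other margins unchanged.
-/

open Finset
open scoped Classical

noncomputable section

variable {Cand : Type*}

/-- `t`-approval score of `c` in the election `(F, V)`, where each vote is a linear order on
the candidate type: the number of votes in which fewer than `t` candidates of `F` are ranked
above `c`. -/
def approvalScore [DecidableEq Cand] (t : ℕ) (F : Finset Cand)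
    (V : List (LinearOrder Cand)) (c : Cand) : ℕ :=
  (V.map fun v => if (F.filter fun b => v.lt b c).card < t then 1 else 0).sum

/-- `t`-approval winner set of the election `(F, V)`: the candidates of `F` with maximum
`t`-approval score. -/
def approvalWinners [DecidableEq Cand] (t : ℕ) (F : Finset Cand)
    (V : List (LinearOrder Cand)) : Finset Cand :=
  F.filter fun c => ∀ b ∈ F, approvalScore t F V b ≤ approvalScore t F V c

-- `v.lt a b` means that `v` ranks `a` above `b`.
def pairwiseMargin (V : List (LinearOrder Cand)) (a b : Cand) : ℤ :=
  V.countP (fun v => v.lt a b) - V.countP (fun v => v.lt b a)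

section PairwiseMargin

variable {V W : List (LinearOrder Cand)} {v w : LinearOrder Cand} {a b : Cand}

theorem pairwiseMargin_append :
    pairwiseMargin (V ++ W) a b = pairwiseMargin V a b + pairwiseMargin W a b := by
  simp only [pairwiseMargin, List.countP_append]
  push_cast
  ring

theorem pairwiseMargin_swap : pairwiseMargin V b a = -pairwiseMargin V a b := by
  simp only [pairwiseMargin, neg_sub]

theorem pairwiseMargin_self : pairwiseMargin V a a = 0 := sub_self _

theorem pairwiseMargin_pair_of_lt (hv : v.lt a b) (hw : w.lt a b) :
    pairwiseMargin [v, w] a b = 2 := by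
  have hv' : ¬ v.lt b a := (let := v; hv.not_gt)
  have hw' : ¬ w.lt b a := (let := w; hw.not_gt)
  simp [pairwiseMargin, hv, hw, hv', hw']

theorem pairwiseMargin_pair_eq_zero (h₁ : v.lt a b ↔ w.lt b a) (h₂ : v.lt b a ↔ w.lt a b) :
    pairwiseMargin [v, w] a b = 0 := by
  simp only [pairwiseMargin, List.countP_cons, List.countP_nil, h₁, h₂]
  push_cast
  ring

theorem pairwiseMargin_double_ne_zero (L : LinearOrder Cand) (hab : a ≠ b) :
    pairwiseMargin [L, L] a b ≠ 0 := by
  let := L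
  rcases hab.lt_or_gt with h | h
  · rw [pairwiseMargin_pair_of_lt h h]
    norm_num
  · rw [pairwiseMargin_swap, pairwiseMargin_pair_of_lt h h]
    norm_num

end PairwiseMargin

section ApprovalScore

variable [DecidableEq Cand]

theorem approvalScore_one_pair (V : List (LinearOrder Cand)) {a b : Cand} (hab : a ≠ b) :
    approvalScore 1 {a, b} V a = V.countP (fun v => v.lt a b) := by
  have approves_iff (v : LinearOrder Cand) :
      (({a, b} : Finset Cand).filter fun x => v.lt x a).card < 1 ↔ v.lt a b := by
    let := v
    simp [Finset.filter_eq_empty_iff, hab.le_iff_lt]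
  induction V with
  | nil => rfl
  | cons v V ih =>
    rw [List.countP_cons, ← ih, add_comm]
    simp only [approvalScore, List.map_cons, List.sum_cons, approves_iff, decide_eq_true_eq]

theorem approvalWinners_pair_eq_iff (V : List (LinearOrder Cand)) {a b : Cand} (hab : a ≠ b) :
    approvalWinners 1 {a, b} V = {a, b} ↔ pairwiseMargin V a b = 0 := by
  rw [pairwiseMargin, sub_eq_zero, Nat.cast_inj, ← approvalScore_one_pair V hab,
    ← approvalScore_one_pair V hab.symm, Finset.pair_comm b a, approvalWinners,
    Finset.filter_eq_self]
  simp only [Finset.mem_insert, Finset.mem_singleton, forall_eq_or_imp, forall_eq, le_refl,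
    true_and, and_true]
  exact ⟨fun h => le_antisymm h.2 h.1, fun h => ⟨h.ge, h.le⟩⟩

end ApprovalScore

theorem exists_votes_reversed_off_pair (L : LinearOrder Cand) {p q : Cand} (hpq : p ≠ q) :
    ∃ v w : LinearOrder Cand, v.lt p q ∧ w.lt p q ∧
      ∀ a b, s(a, b) ≠ s(p, q) → (v.lt a b ↔ w.lt b a) := by
  let := L
  -- `v` is `L` with `q` moved directly below `p`; `w` reverses `v` but keeps `q` directly below `p`.
  let key (c : Cand) : Cand := if c = q then p else c
  have key_ne {a b : Cand} (hab : a ≠ b) (h : s(a, b) ≠ s(p, q)) : key a ≠ key b := by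
    simp only [key]
    split_ifs <;> grind [Sym2.eq_iff]
  have eq_of_key_eq {a b : Cand} (hk : key a = key b) (hq : decide (a = q) = decide (b = q)) :
      a = b := by
    simp only [key] at hk
    split_ifs at hk <;> simp_all
  let f (c : Cand) : Cand ×ₗ Bool := toLex (key c, decide (c = q))
  let g (c : Cand) : Candᵒᵈ ×ₗ Bool := toLex (OrderDual.toDual (key c), decide (c = q))
  have hf : f.Injective := fun a b h => eq_of_key_eq (congrArg (·.1) h) (congrArg (·.2) h)
  have hg : g.Injective := fun a b h => eq_of_key_eq (congrArg (·.1) h) (congrArg (·.2) h)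
  refine ⟨LinearOrder.lift' f hf, LinearOrder.lift' g hg, ?_, ?_, fun a b h => ?_⟩
  · show f p < f q
    simp [f, key, Prod.Lex.toLex_lt_toLex, hpq]
  · show g p < g q
    simp [g, key, Prod.Lex.toLex_lt_toLex, hpq]
  · show f a < f b ↔ g b < g a
    by_cases hab : a = b
    · simp [hab]
    · simp [f, g, Prod.Lex.toLex_lt_toLex, key_ne hab h, (key_ne hab h).symm]

theorem exists_pairwiseMargin_eq_ite (L : LinearOrder Cand) (z : Sym2 Cand) :
    ∃ V : List (LinearOrder Cand),
      ∀ a b, pairwiseMargin V a b = if s(a, b) = z then pairwiseMargin [L, L] b a else 0 := by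
  let := L
  induction z using Sym2.ind with | _ x y => ?_
  wlog hyx : y < x generalizing x y
  · by_cases hx : x = y
    · subst hx
      refine ⟨[], fun a b => ?_⟩
      split_ifs with h
      · obtain ⟨rfl, rfl⟩ := (Sym2.eq_iff.1 h).elim id id
        simp [pairwiseMargin_self]
      · rfl
    · obtain ⟨V, hV⟩ := this y x (lt_of_le_of_ne (not_lt.1 hyx) hx)
      exact ⟨V, fun a b => by rw [hV, Sym2.eq_swap (a := y)]⟩
  obtain ⟨v, w, hv, hw, hoff⟩ := exists_votes_reversed_off_pair L hyx.ne'
  refine ⟨[v, w], fun a b => ?_⟩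
  split_ifs with h
  · rcases Sym2.eq_iff.1 h with ⟨rfl, rfl⟩ | ⟨rfl, rfl⟩
    · rw [pairwiseMargin_pair_of_lt hv hw, pairwiseMargin_pair_of_lt hyx hyx]
    · rw [pairwiseMargin_swap, pairwiseMargin_pair_of_lt hv hw, pairwiseMargin_swap,
        pairwiseMargin_pair_of_lt hyx hyx]
  · exact pairwiseMargin_pair_eq_zero (hoff a b h) (hoff b a (by rwa [Sym2.eq_swap]))

theorem exists_pairwiseMargin_eq_indicator (L : LinearOrder Cand) (S : Finset (Sym2 Cand)) :
    ∃ V : List (LinearOrder Cand),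
      ∀ a b, pairwiseMargin V a b = if s(a, b) ∈ S then pairwiseMargin [L, L] b a else 0 := by
  induction S using Finset.induction_on with
  | empty => exact ⟨[], fun a b => by simp [pairwiseMargin]⟩
  | insert z S hz ih =>
    obtain ⟨V, hV⟩ := ih
    obtain ⟨W, hW⟩ := exists_pairwiseMargin_eq_ite L z
    refine ⟨W ++ V, fun a b => ?_⟩
    rw [pairwiseMargin_append, hV, hW]
    by_cases h : s(a, b) = z
    · simp [h, hz]
    · simp [h]

theorem exists_profile_approvalWinners_pair_eq_iff [DecidableEq Cand] (S : Finset (Sym2 Cand)) :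
    ∃ V : List (LinearOrder Cand), V ≠ [] ∧
      ∀ a b, a ≠ b → (approvalWinners 1 {a, b} V = {a, b} ↔ s(a, b) ∈ S) := by
  let L : LinearOrder Cand := IsWellOrder.linearOrder WellOrderingRel
  obtain ⟨V, hV⟩ := exists_pairwiseMargin_eq_indicator L S
  refine ⟨[L, L] ++ V, by simp, fun a b hab => ?_⟩
  rw [approvalWinners_pair_eq_iff _ hab, pairwiseMargin_append, hV]
  split_ifs with h
  · simp [h, pairwiseMargin_swap (a := a)]
  · simp [h, pairwiseMargin_double_ne_zero L hab]

theorem one_approval_pair_profile_general [DecidableEq Cand]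
    (W X : Finset Cand)
    (T : Finset (Cand × Cand)) :
    ∃ V : List (LinearOrder Cand), V ≠ [] ∧
      ∀ a ∈ W ∪ X, ∀ b ∈ W ∪ X, a ≠ b →
        (approvalWinners 1 ({a, b} : Finset Cand) V = {a, b} ↔
          (a, b) ∈ T ∨ (b, a) ∈ T) := by
  obtain ⟨V, hV, hties⟩ :=
    exists_profile_approvalWinners_pair_eq_iff (T.image fun t => s(t.1, t.2))
  refine ⟨V, hV, fun a _ b _ hab => (hties a b hab).trans ?_⟩
  simp only [Finset.mem_image, Prod.exists, Sym2.eq_iff]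
  grind

/-- profile-construction Lemma 3.1 for Theorem 4, stated existentially:
given disjoint finite sets `W` and `X` of candidates, `A = W ∪ X`, and a set `T ⊆ W × X` of
exactly 3 pairs, there is a nonempty finite profile `V` of linear votes such that for all
distinct `a, b ∈ A`, the 1-approval winner set of `({a, b}, V)` equals `{a, b}` if and only
if `(a, b) ∈ T` or `(b, a) ∈ T`. -/
theorem one_approval_pair_profile [DecidableEq Cand]
    (W X : Finset Cand) (hWX : Disjoint W X)
    (T : Finset (Cand × Cand)) (hT : T ⊆ W ×ˢ X) (hT3 : T.card = 3) :
    ∃ V : List (LinearOrder Cand), V ≠ [] ∧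
      ∀ a ∈ W ∪ X, ∀ b ∈ W ∪ X, a ≠ b →
        (approvalWinners 1 ({a, b} : Finset Cand) V = {a, b} ↔
          (a, b) ∈ T ∨ (b, a) ∈ T) :=
  one_approval_pair_profile_general W X T
end
end

section
/- Fix t ≥ 1. Let s, x, y, z be distinct candidates, let α_1, …, α_7 be pairwise disjoint candidate sets each of size t − 1, all disjoint from {s, x, y, z}, and let A be a finite candidate set with {x, y, z} ⊆ A and A disjoint from C := {s} ∪ α_1 ∪ ⋯ ∪ α_7. Let V = (v_1, …, v_7) be any seven linear orders on the candidate type such that, from the top: v_1 ranks the t − 1 members of α_1 (in some order) followed by x, s, y, z; v_2 ranks α_2 then x, s, y, z; v_3 ranks α_3 then y, s, z, x; v_4 ranks α_4 then y, s, z, x; v_5 ranks α_5 then z, s, x, y; v_6 ranks α_6 then z, s, x, y; v_7 ranks α_7 then s, x, y, z; with all remaining candidates of C ∪ A below these in arbitrary order. Then for every nonempty Â ⊆ A, the t-approval winner set of the election (C ∪ Â, V) equals Â if and only if Â = {x, y, z}. -/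
open Finset
open scoped Classical

noncomputable section

variable {Cand : Type*}

/-- `IsTopSegment v F l` says that, within the candidate set `F`, the vote `v` ranks the
members of the list `l` at the top, in the order in which they are listed (all remaining
candidates of `F` are ranked below all of `l`, in arbitrary order). -/
def IsTopSegment (v : LinearOrder Cand) (F : Finset Cand) (l : List Cand) : Prop :=
  (∀ c ∈ l, c ∈ F) ∧ l.Chain' (fun a b => v.lt a b) ∧
    ∀ b ∈ F, b ∉ l → ∀ c ∈ l, v.lt c b

lemma approved_iff_aux [DecidableEq Cand] (t : ℕ) (ht : 1 ≤ t)
    (v : LinearOrder Cand)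
    (F' F : Finset Cand) (hFF' : F ⊆ F')
    (l m1 m2 : List Cand) (w : Cand)
    (hts : IsTopSegment v F' (l ++ (m1 ++ w :: m2)))
    (hlF : ∀ a ∈ l, a ∈ F) (hlcard : l.toFinset.card = t - 1)
    (hm1 : ∀ a ∈ m1, a ∉ F) (hwF : w ∈ F) (hwl : w ∉ l)
    (c : Cand) (hc : c ∈ F) :
    ((F.filter fun b => v.lt b c).card < t ↔ c ∈ l ∨ c = w) := by
  obtain ⟨hmemF', hchain, hout⟩ := hts
  have hpw : (l ++ (m1 ++ w :: m2)).Pairwise fun a b => v.lt a b := by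
    haveI : IsTrans Cand fun a b => v.lt a b := ⟨fun _ _ _ h1 h2 => h1.trans h2⟩
    exact List.isChain_iff_pairwise.mp hchain
  obtain ⟨hl_pw, hm_pw, h_lm⟩ := List.pairwise_append.mp hpw
  obtain ⟨hm1_pw, hw_pw, h_m1w⟩ := List.pairwise_append.mp hm_pw
  have hw_m2 : ∀ b ∈ m2, v.lt w b := (List.pairwise_cons.mp hw_pw).1
  have hwmem : w ∈ l ++ (m1 ++ w :: m2) := by simp
  have hasymm : ∀ {a b : Cand}, v.lt a b → v.lt b a → False := fun h1 h2 =>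
    absurd (h1.trans h2) (@lt_irrefl Cand v.toPartialOrder.toPreorder _)
  constructor
  · intro h
    by_contra hcon
    push_neg at hcon
    obtain ⟨hcl, hcw⟩ := hcon
    have hcases : c ∈ m2 ∨ c ∉ (l ++ (m1 ++ w :: m2)) := by
      by_cases hmem : c ∈ l ++ (m1 ++ w :: m2)
      · rcases List.mem_append.mp hmem with h1 | h1
        · exact absurd h1 hcl
        · rcases List.mem_append.mp h1 with h2 | h2
          · exact absurd hc (hm1 c h2)
          · rcases List.mem_cons.mp h2 with h3 | h3
            · exact absurd h3 hcw
            · exact Or.inl h3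
      · exact Or.inr hmem
    have hsub : insert w l.toFinset ⊆ F.filter fun b => v.lt b c := by
      intro b hb
      rw [Finset.mem_filter]
      rcases Finset.mem_insert.mp hb with rfl | hb
      · refine ⟨hwF, ?_⟩
        rcases hcases with h1 | h1
        · exact hw_m2 c h1
        · exact hout c (hFF' hc) h1 b hwmem
      · rw [List.mem_toFinset] at hb
        refine ⟨hlF b hb, ?_⟩
        rcases hcases with h1 | h1
        · exact h_lm b hb c (by simp [h1])
        · exact hout c (hFF' hc) h1 b (by simp [hb])
    have hcard : t ≤ (F.filter fun b => v.lt b c).card := by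
      have := Finset.card_le_card hsub
      rw [Finset.card_insert_of_notMem (by simpa using hwl), hlcard] at this
      omega
    omega
  · intro h
    have hclist : c ∈ l ++ (m1 ++ w :: m2) := by
      rcases h with h | rfl
      · simp [h]
      · exact hwmem
    have hsub : (F.filter fun b => v.lt b c) ⊆ l.toFinset := by
      intro b hb
      rw [Finset.mem_filter] at hb
      obtain ⟨hbF, hbc⟩ := hb
      by_cases hbl : b ∈ l ++ (m1 ++ w :: m2)
      · rcases List.mem_append.mp hbl with h1 | h1
        · simpa using h1
        · exfalso
          rcases List.mem_append.mp h1 with h2 | h2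
          · exact hm1 b h2 hbF
          · have hcb : v.lt c b := by
              rcases h with h | rfl
              · exact h_lm c h b (by simpa using h1)
              · rcases List.mem_cons.mp h2 with rfl | h3
                · exact absurd hbc (@lt_irrefl Cand v.toPartialOrder.toPreorder _)
                · exact hw_m2 b h3
            exact hasymm hbc hcb
      · exact absurd (hout b (hFF' hbF) hbl c hclist) (fun hh => hasymm hbc hh)
    have := Finset.card_le_card hsub
    rw [hlcard] at this
    omega

/-- Lemma 3, district gadget for `t`-approval, Theorem 6: with
`C = {s} ∪ α_1 ∪ ⋯ ∪ α_7` and the seven votes whose top segments (within `C ∪ A`) are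
`α_1, x, s, y, z`; `α_2, x, s, y, z`; `α_3, y, s, z, x`; `α_4, y, s, z, x`;
`α_5, z, s, x, y`; `α_6, z, s, x, y`; `α_7, s, x, y, z`, a nonempty set `Ahat ⊆ A` satisfies
that the `t`-approval winner set of `(C ∪ Ahat, V)` equals `Ahat` if and only if `Ahat = {x, y, z}`. -/
theorem t_approval_district_gadget [DecidableEq Cand]
    (t : ℕ) (ht : 1 ≤ t)
    (s x y z : Cand) (hdist : ([s, x, y, z] : List Cand).Nodup)
    (α : Fin 7 → Finset Cand)
    (hαcard : ∀ i, (α i).card = t - 1)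
    (hαdisj : ∀ i j, i ≠ j → Disjoint (α i) (α j))
    (hαs : ∀ i, Disjoint (α i) ({s, x, y, z} : Finset Cand))
    (A : Finset Cand) (hxyzA : ({x, y, z} : Finset Cand) ⊆ A)
    (hAC : Disjoint A (insert s (Finset.univ.biUnion α)))
    (v : Fin 7 → LinearOrder Cand)
    (hv : ∀ i : Fin 7, ∃ l : List Cand, l.toFinset = α i ∧ l.length = t - 1 ∧
      IsTopSegment (v i) (insert s (Finset.univ.biUnion α) ∪ A)
        (l ++ (![[x, s, y, z], [x, s, y, z], [y, s, z, x], [y, s, z, x],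
                 [z, s, x, y], [z, s, x, y], [s, x, y, z]] : Fin 7 → List Cand) i)) :
    ∀ Ahat ⊆ A, Ahat.Nonempty →
      (approvalWinners t (insert s (Finset.univ.biUnion α) ∪ Ahat)
          ((List.finRange 7).map v) = Ahat ↔ Ahat = ({x, y, z} : Finset Cand)) := by
  -- distinctness
  simp only [List.nodup_cons, List.mem_cons, List.not_mem_nil, or_false, List.nodup_nil,
    and_true, not_or] at hdist
  obtain ⟨⟨hsx, hsy, hsz⟩, ⟨hxy, hxz⟩, hyz, -⟩ := hdist
  set C : Finset Cand := insert s (Finset.univ.biUnion α) with hCdef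
  -- basic memberships
  have hsC : s ∈ C := Finset.mem_insert_self _ _
  have hαC : ∀ i, ∀ a ∈ α i, a ∈ C := fun i a ha =>
    Finset.mem_insert_of_mem (Finset.mem_biUnion.mpr ⟨i, Finset.mem_univ _, ha⟩)
  have hxA : x ∈ A := hxyzA (by simp)
  have hyA : y ∈ A := hxyzA (by simp)
  have hzA : z ∈ A := hxyzA (by simp)
  have hAnotC : ∀ a ∈ A, a ∉ C := fun a ha => Finset.disjoint_left.mp hAC ha
  have hα_ne : ∀ i, ∀ a ∈ α i, a ≠ s ∧ a ≠ x ∧ a ≠ y ∧ a ≠ z := by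
    intro i a ha
    have := Finset.disjoint_left.mp (hαs i) ha
    simp only [Finset.mem_insert, Finset.mem_singleton, not_or] at this
    exact this
  have hs_notα : ∀ i, s ∉ α i := fun i h => (hα_ne i s h).1 rfl
  have hx_notα : ∀ i, x ∉ α i := fun i h => (hα_ne i x h).2.1 rfl
  have hy_notα : ∀ i, y ∉ α i := fun i h => (hα_ne i y h).2.2.1 rfl
  have hz_notα : ∀ i, z ∉ α i := fun i h => (hα_ne i z h).2.2.2 rfl
  intro Ahat hAhatA hne
  set F : Finset Cand := C ∪ Ahat with hFdef
  set F' : Finset Cand := C ∪ A with hF'def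
  have hFF' : F ⊆ F' := Finset.union_subset_union_right hAhatA
  have hsF : s ∈ F := Finset.mem_union_left _ hsC
  have hαF : ∀ i, ∀ a ∈ α i, a ∈ F := fun i a ha => Finset.mem_union_left _ (hαC i a ha)
  have hAhatF : ∀ a ∈ Ahat, a ∈ F := fun a ha => Finset.mem_union_right _ ha
  have hAhat_ne_s : ∀ a ∈ Ahat, a ≠ s := by
    rintro a ha rfl; exact hAnotC a (hAhatA ha) hsC
  have hAhat_notα : ∀ a ∈ Ahat, ∀ i, a ∉ α i := fun a ha i h =>
    hAnotC a (hAhatA ha) (hαC i a h)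
  -- choose the lists
  choose l hl1 hl2 hl3 using hv
  have hlF : ∀ i, ∀ a ∈ l i, a ∈ F := by
    intro i a ha
    exact hαF i a (by rw [← hl1 i]; exact List.mem_toFinset.mpr ha)
  have hlcard : ∀ i, (l i).toFinset.card = t - 1 := fun i => by rw [hl1 i, hαcard i]
  have hmem_l : ∀ i a, a ∈ l i ↔ a ∈ α i := fun i a => by
    rw [← hl1 i, List.mem_toFinset]
  -- the top non-α candidates
  set wx : Cand := if x ∈ Ahat then x else s with hwx
  set wy : Cand := if y ∈ Ahat then y else s with hwy
  set wz : Cand := if z ∈ Ahat then z else s with hwz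
  set w : Fin 7 → Cand := ![wx, wx, wy, wy, wz, wz, s] with hwdef
  have hwxF : wx ∈ F := by rw [hwx]; split_ifs with h; exacts [hAhatF x h, hsF]
  have hwyF : wy ∈ F := by rw [hwy]; split_ifs with h; exacts [hAhatF y h, hsF]
  have hwzF : wz ∈ F := by rw [hwz]; split_ifs with h; exacts [hAhatF z h, hsF]
  have hwx_cases : wx = x ∨ wx = s := by rw [hwx]; split_ifs <;> simp
  have hwy_cases : wy = y ∨ wy = s := by rw [hwy]; split_ifs <;> simp
  have hwz_cases : wz = z ∨ wz = s := by rw [hwz]; split_ifs <;> simp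
  have hwx_notα : ∀ i, wx ∉ α i := by
    intro i; rcases hwx_cases with h | h <;> rw [h]; exacts [hx_notα i, hs_notα i]
  have hwy_notα : ∀ i, wy ∉ α i := by
    intro i; rcases hwy_cases with h | h <;> rw [h]; exacts [hy_notα i, hs_notα i]
  have hwz_notα : ∀ i, wz ∉ α i := by
    intro i; rcases hwz_cases with h | h <;> rw [h]; exacts [hz_notα i, hs_notα i]
  have hw_vals : ∀ i, w i = x ∨ w i = y ∨ w i = z ∨ w i = s := by
    have hx' : wx = x ∨ wx = y ∨ wx = z ∨ wx = s := by
      rcases hwx_cases with h | h <;> simp [h]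
    have hy' : wy = x ∨ wy = y ∨ wy = z ∨ wy = s := by
      rcases hwy_cases with h | h <;> simp [h]
    have hz' : wz = x ∨ wz = y ∨ wz = z ∨ wz = s := by
      rcases hwz_cases with h | h <;> simp [h]
    intro i
    fin_cases i
    · exact hx'
    · exact hx'
    · exact hy'
    · exact hy'
    · exact hz'
    · exact hz'
    · exact Or.inr (Or.inr (Or.inr rfl))
  -- key per-vote characterization
  have key : ∀ (i : Fin 7) (c : Cand), c ∈ F →
      (((F.filter fun b => (v i).lt b c).card < t) ↔ c ∈ α i ∨ c = w i) := by
    have helper : ∀ (i : Fin 7) (m1 m2 : List Cand) (wi : Cand),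
        IsTopSegment (v i) F' (l i ++ (m1 ++ wi :: m2)) →
        (∀ a ∈ m1, a ∉ F) → wi ∈ F → wi ∉ α i →
        ∀ c ∈ F, (((F.filter fun b => (v i).lt b c).card < t) ↔ c ∈ α i ∨ c = wi) := by
      intro i m1 m2 wi hseg hm1 hwiF hwiα c hc
      have := approved_iff_aux t ht (v i) F' F hFF' (l i) m1 m2 wi hseg (hlF i)
        (hlcard i) hm1 hwiF (fun h => hwiα ((hmem_l i wi).mp h)) c hc
      rw [this, hmem_l]
    intro i c hc
    fin_cases i
    · show _ ↔ c ∈ α 0 ∨ c = wx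
      by_cases hx : x ∈ Ahat
      · have : wx = x := if_pos hx
        rw [this]
        exact helper 0 [] [s, y, z] x (hl3 0) (by simp) (hAhatF x hx) (hx_notα 0) c hc
      · have hxF : x ∉ F := by
          intro h
          rcases Finset.mem_union.mp h with h | h
          exacts [hAnotC x hxA h, hx h]
        have : wx = s := if_neg hx
        rw [this]
        exact helper 0 [x] [y, z] s (hl3 0) (by simpa using hxF) hsF (hs_notα 0) c hc
    · show _ ↔ c ∈ α 1 ∨ c = wx
      by_cases hx : x ∈ Ahat
      · rw [show wx = x from if_pos hx]
        exact helper 1 [] [s, y, z] x (hl3 1) (by simp) (hAhatF x hx) (hx_notα 1) c hc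
      · have hxF : x ∉ F := by
          intro h
          rcases Finset.mem_union.mp h with h | h
          exacts [hAnotC x hxA h, hx h]
        rw [show wx = s from if_neg hx]
        exact helper 1 [x] [y, z] s (hl3 1) (by simpa using hxF) hsF (hs_notα 1) c hc
    · show _ ↔ c ∈ α 2 ∨ c = wy
      by_cases hy : y ∈ Ahat
      · rw [show wy = y from if_pos hy]
        exact helper 2 [] [s, z, x] y (hl3 2) (by simp) (hAhatF y hy) (hy_notα 2) c hc
      · have hyF : y ∉ F := by
          intro h
          rcases Finset.mem_union.mp h with h | h
          exacts [hAnotC y hyA h, hy h]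
        rw [show wy = s from if_neg hy]
        exact helper 2 [y] [z, x] s (hl3 2) (by simpa using hyF) hsF (hs_notα 2) c hc
    · show _ ↔ c ∈ α 3 ∨ c = wy
      by_cases hy : y ∈ Ahat
      · rw [show wy = y from if_pos hy]
        exact helper 3 [] [s, z, x] y (hl3 3) (by simp) (hAhatF y hy) (hy_notα 3) c hc
      · have hyF : y ∉ F := by
          intro h
          rcases Finset.mem_union.mp h with h | h
          exacts [hAnotC y hyA h, hy h]
        rw [show wy = s from if_neg hy]
        exact helper 3 [y] [z, x] s (hl3 3) (by simpa using hyF) hsF (hs_notα 3) c hc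
    · show _ ↔ c ∈ α 4 ∨ c = wz
      by_cases hz : z ∈ Ahat
      · rw [show wz = z from if_pos hz]
        exact helper 4 [] [s, x, y] z (hl3 4) (by simp) (hAhatF z hz) (hz_notα 4) c hc
      · have hzF : z ∉ F := by
          intro h
          rcases Finset.mem_union.mp h with h | h
          exacts [hAnotC z hzA h, hz h]
        rw [show wz = s from if_neg hz]
        exact helper 4 [z] [x, y] s (hl3 4) (by simpa using hzF) hsF (hs_notα 4) c hc
    · show _ ↔ c ∈ α 5 ∨ c = wz
      by_cases hz : z ∈ Ahat
      · rw [show wz = z from if_pos hz]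
        exact helper 5 [] [s, x, y] z (hl3 5) (by simp) (hAhatF z hz) (hz_notα 5) c hc
      · have hzF : z ∉ F := by
          intro h
          rcases Finset.mem_union.mp h with h | h
          exacts [hAnotC z hzA h, hz h]
        rw [show wz = s from if_neg hz]
        exact helper 5 [z] [x, y] s (hl3 5) (by simpa using hzF) hsF (hs_notα 5) c hc
    · show _ ↔ c ∈ α 6 ∨ c = s
      exact helper 6 [] [x, y, z] s (hl3 6) (by simp) hsF (hs_notα 6) c hc
  -- scores
  set sc : Cand → ℕ := fun c => ∑ i : Fin 7, if c ∈ α i ∨ c = w i then 1 else 0 with hscdef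
  have score_eq : ∀ c ∈ F, approvalScore t F ((List.finRange 7).map v) c = sc c := by
    intro c hc
    rw [hscdef]
    simp only [approvalScore, List.map_map]
    rw [Fin.sum_univ_def]
    refine congrArg List.sum (List.map_congr_left ?_)
    intro i _
    simp only [Function.comp]
    rw [if_congr (key i c hc) rfl rfl]
  -- expand sc into 7 terms
  have hsc_expand : ∀ c, sc c =
      (if c ∈ α 0 ∨ c = wx then 1 else 0) + (if c ∈ α 1 ∨ c = wx then 1 else 0) +
      (if c ∈ α 2 ∨ c = wy then 1 else 0) + (if c ∈ α 3 ∨ c = wy then 1 else 0) +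
      (if c ∈ α 4 ∨ c = wz then 1 else 0) + (if c ∈ α 5 ∨ c = wz then 1 else 0) +
      (if c ∈ α 6 ∨ c = s then 1 else 0) := by
    intro c
    show (∑ i : Fin 7, if c ∈ α i ∨ c = w i then 1 else 0) = _
    rw [Fin.sum_univ_seven]
    rfl
  -- score of s
  have hsc_s : sc s = (if s = wx then 1 else 0) + (if s = wx then 1 else 0) +
      (if s = wy then 1 else 0) + (if s = wy then 1 else 0) +
      (if s = wz then 1 else 0) + (if s = wz then 1 else 0) + 1 := by
    rw [hsc_expand]
    simp [hs_notα]
  have hsc_s_ge1 : 1 ≤ sc s := by rw [hsc_s]; split_ifs <;> omega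
  -- score of a member of Ahat
  have hsc_Ahat : ∀ a ∈ Ahat, sc a = (if a = wx then 1 else 0) + (if a = wx then 1 else 0) +
      (if a = wy then 1 else 0) + (if a = wy then 1 else 0) +
      (if a = wz then 1 else 0) + (if a = wz then 1 else 0) := by
    intro a ha
    rw [hsc_expand]
    simp [hAhat_notα a ha, hAhat_ne_s a ha]
  have hsc_Ahat_le2 : ∀ a ∈ Ahat, sc a ≤ 2 := by
    intro a ha
    have hane : a ≠ s := hAhat_ne_s a ha
    have h1 : ¬(a = wx ∧ a = wy) := by
      rintro ⟨e1, e2⟩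
      rcases hwx_cases with h | h
      · rw [h] at e1
        rcases hwy_cases with h' | h'
        · rw [h'] at e2; exact hxy (e1.symm.trans e2)
        · rw [h'] at e2; exact hane e2
      · rw [h] at e1; exact hane e1
    have h2 : ¬(a = wx ∧ a = wz) := by
      rintro ⟨e1, e2⟩
      rcases hwx_cases with h | h
      · rw [h] at e1
        rcases hwz_cases with h' | h'
        · rw [h'] at e2; exact hxz (e1.symm.trans e2)
        · rw [h'] at e2; exact hane e2
      · rw [h] at e1; exact hane e1
    have h3 : ¬(a = wy ∧ a = wz) := by
      rintro ⟨e1, e2⟩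
      rcases hwy_cases with h | h
      · rw [h] at e1
        rcases hwz_cases with h' | h'
        · rw [h'] at e2; exact hyz (e1.symm.trans e2)
        · rw [h'] at e2; exact hane e2
      · rw [h] at e1; exact hane e1
    rw [hsc_Ahat a ha]
    by_cases e1 : a = wx
    · by_cases e2 : a = wy
      · exact absurd ⟨e1, e2⟩ h1
      · by_cases e3 : a = wz
        · exact absurd ⟨e1, e3⟩ h2
        · simp only [if_pos e1, if_neg e2, if_neg e3]; omega
    · by_cases e2 : a = wy
      · by_cases e3 : a = wz
        · exact absurd ⟨e2, e3⟩ h3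
        · simp only [if_pos e2, if_neg e1, if_neg e3]; omega
      · by_cases e3 : a = wz
        · simp only [if_pos e3, if_neg e1, if_neg e2]; omega
        · simp only [if_neg e1, if_neg e2, if_neg e3]; omega
  -- score of a member of α j
  have hsc_α : ∀ j, ∀ c ∈ α j, sc c = 1 := by
    intro j c hc
    have hcne : ∀ i, ¬(c = w i) := by
      intro i hcw
      rcases hw_vals i with h | h | h | h <;> rw [h] at hcw <;> subst hcw
      exacts [hx_notα j hc, hy_notα j hc, hz_notα j hc, hs_notα j hc]
    have hci : ∀ i, (c ∈ α i ∨ c = w i) ↔ i = j := by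
      intro i
      constructor
      · rintro (h | h)
        · by_contra hij
          exact Finset.disjoint_left.mp (hαdisj i j hij) h hc
        · exact absurd h (hcne i)
      · rintro rfl; exact Or.inl hc
    show (∑ i : Fin 7, if c ∈ α i ∨ c = w i then 1 else 0) = 1
    simp only [hci]
    simp
  -- now the main equivalence
  constructor
  · -- winners = Ahat → Ahat = {x,y,z}
    intro hwin
    obtain ⟨a, ha⟩ := hne
    have haw : a ∈ approvalWinners t F ((List.finRange 7).map v) := hwin ▸ ha
    rw [approvalWinners, Finset.mem_filter] at haw
    obtain ⟨haF, hamax⟩ := haw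
    have hsa : sc s ≤ sc a := by
      have := hamax s hsF
      rwa [score_eq s hsF, score_eq a haF] at this
    have hale2 := hsc_Ahat_le2 a ha
    have hx : x ∈ Ahat := by
      by_contra hx
      have hwxs : wx = s := if_neg hx
      have : 3 ≤ sc s := by
        rw [hsc_s, hwxs]
        simp only [if_pos rfl]
        split_ifs <;> omega
      omega
    have hy : y ∈ Ahat := by
      by_contra hy
      have hwys : wy = s := if_neg hy
      have : 3 ≤ sc s := by
        rw [hsc_s, hwys]
        simp only [if_pos rfl]
        split_ifs <;> omega
      omega
    have hz : z ∈ Ahat := by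
      by_contra hz
      have hwzs : wz = s := if_neg hz
      have : 3 ≤ sc s := by
        rw [hsc_s, hwzs]
        simp only [if_pos rfl]
        split_ifs <;> omega
      omega
    have hsub : Ahat ⊆ {x, y, z} := by
      intro b hb
      by_contra hbxyz
      simp only [Finset.mem_insert, Finset.mem_singleton, not_or] at hbxyz
      obtain ⟨hbx, hby, hbz⟩ := hbxyz
      have hb0 : sc b = 0 := by
        rw [hsc_Ahat b hb]
        have e1 : b ≠ wx := by
          rcases hwx_cases with h | h <;> rw [h]; exacts [hbx, hAhat_ne_s b hb]
        have e2 : b ≠ wy := by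
          rcases hwy_cases with h | h <;> rw [h]; exacts [hby, hAhat_ne_s b hb]
        have e3 : b ≠ wz := by
          rcases hwz_cases with h | h <;> rw [h]; exacts [hbz, hAhat_ne_s b hb]
        simp [e1, e2, e3]
      have hbw : b ∈ approvalWinners t F ((List.finRange 7).map v) := hwin ▸ hb
      rw [approvalWinners, Finset.mem_filter] at hbw
      have := hbw.2 s hsF
      rw [score_eq s hsF, score_eq b (hAhatF b hb)] at this
      omega
    exact Finset.Subset.antisymm hsub (by
      intro b hb
      simp only [Finset.mem_insert, Finset.mem_singleton] at hb
      rcases hb with rfl | rfl | rfl <;> assumption)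
  · -- Ahat = {x,y,z} → winners = Ahat
    intro hA3
    subst hA3
    have hxh : x ∈ ({x, y, z} : Finset Cand) := by simp
    have hyh : y ∈ ({x, y, z} : Finset Cand) := by simp
    have hzh : z ∈ ({x, y, z} : Finset Cand) := by simp
    have hwxx : wx = x := if_pos hxh
    have hwyy : wy = y := if_pos hyh
    have hwzz : wz = z := if_pos hzh
    have hxF : x ∈ F := hAhatF x hxh
    have hyF : y ∈ F := hAhatF y hyh
    have hzF : z ∈ F := hAhatF z hzh
    have hscx : sc x = 2 := by
      rw [hsc_expand, hwxx, hwyy, hwzz]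
      simp [hx_notα, hxy, hxz, Ne.symm hsx]
    have hscy : sc y = 2 := by
      rw [hsc_expand, hwxx, hwyy, hwzz]
      simp [hy_notα, Ne.symm hxy, hyz, Ne.symm hsy]
    have hscz : sc z = 2 := by
      rw [hsc_expand, hwxx, hwyy, hwzz]
      simp [hz_notα, Ne.symm hxz, Ne.symm hyz, Ne.symm hsz]
    have hscs : sc s = 1 := by
      rw [hsc_s, hwxx, hwyy, hwzz]
      simp [hsx, hsy, hsz]
    have hbound : ∀ b ∈ F, sc b ≤ 2 := by
      intro b hb
      rcases Finset.mem_union.mp hb with hb | hb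
      · rcases Finset.mem_insert.mp hb with rfl | hb
        · omega
        · obtain ⟨j, _, hj⟩ := Finset.mem_biUnion.mp hb
          rw [hsc_α j b hj]; omega
      · simp only [Finset.mem_insert, Finset.mem_singleton] at hb
        rcases hb with rfl | rfl | rfl <;> omega
    ext c
    rw [approvalWinners, Finset.mem_filter]
    constructor
    · rintro ⟨hcF, hcmax⟩
      have h2 : 2 ≤ sc c := by
        have := hcmax x hxF
        rw [score_eq x hxF, score_eq c hcF, hscx] at this
        exact this
      rcases Finset.mem_union.mp hcF with hc | hc
      · rcases Finset.mem_insert.mp hc with rfl | hc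
        · omega
        · obtain ⟨j, _, hj⟩ := Finset.mem_biUnion.mp hc
          rw [hsc_α j c hj] at h2; omega
      · exact hc
    · intro hc
      refine ⟨hAhatF c hc, ?_⟩
      intro b hb
      rw [score_eq b hb, score_eq c (hAhatF c hc)]
      have hc2 : sc c = 2 := by
        simp only [Finset.mem_insert, Finset.mem_singleton] at hc
        rcases hc with rfl | rfl | rfl <;> assumption
      rw [hc2]
      exact hbound b hb


end
end

section
/- Fix t ≥ 1. Let s, x, y, z be distinct candidates, let α be a candidate set of size t − 1 disjoint from {s, x, y, z}, and let A be a finite candidate set with {x, y, z} ⊆ A and A disjoint from C := {s} ∪ α. Let A' = A ∖ {x, y, z} and fix a linear order on A'. Let V consist of five linear orders on the candidate type, each ending with the t − 1 members of α in the bottom positions (in a fixed order) preceded by the members of A' in the fixed order, and whose top four candidates are, respectively: s, x, y, z; s, y, z, x; s, z, x, y; x, y, z, s; x, y, z, s. Then for every nonempty Â ⊆ A, the t-veto winner set of the election (C ∪ Â, V) equals Â if and only if Â = {x, y, z}. -/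
/-!
Put `F = {s} ∪ α ∪ Â` and `M = {s} ∪ Â`. Every vote ranks the `t - 1` members of `α` at the
bottom of `F`, so a candidate scores in a vote iff it lies in `M` and is not the member of `M`
ranked last there.

If `Â` contains a member of `A'`, then `s` is ranked above it in every vote, so `s` is never last
in `M`, gets the maximal score `5` and wins although `s ∉ Â`. If `Â ⊆ {x, y, z}`, then `s` is last
in `M` exactly in the last two votes and scores `3`, while each of the first three votes vetoes a
member of `Â`. For `Â` to be the winner set, each of its members must beat `s`, i.e. be vetoed at
most once, so these three vetoes hit three distinct members and `Â = {x, y, z}`. Conversely, for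
`Â = {x, y, z}` the vetoes fall on `z, x, y, s, s`: `x, y, z` score `4`, `s` scores `3` and `α`
scores `0`.
-/

open Finset
open scoped Classical

noncomputable section

variable {Cand : Type*}

/-- `t`-veto score of `c` in the election `(F, V)`, where each vote is a linear order on the
candidate type: the number of votes in which `c` is not among the bottom `t` candidates of
`F`, i.e., in which at least `t` candidates of `F` are ranked below `c`. -/
def vetoScore [DecidableEq Cand] (t : ℕ) (F : Finset Cand)
    (V : List (LinearOrder Cand)) (c : Cand) : ℕ :=
  (V.map fun v => if t ≤ (F.filter fun b => v.lt c b).card then 1 else 0).sum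

/-- `t`-veto winner set of the election `(F, V)`: the candidates of `F` with maximum
`t`-veto score. -/
def vetoWinners [DecidableEq Cand] (t : ℕ) (F : Finset Cand)
    (V : List (LinearOrder Cand)) : Finset Cand :=
  F.filter fun c => ∀ b ∈ F, vetoScore t F V b ≤ vetoScore t F V c

/-- In a vote `v`, `v.lt a b` means that `a` is ranked above `b` (as in `IsTopSegment`), so the
last-ranked member of `M` is its `v`-greatest element. -/
def IsRankedLast (v : LinearOrder Cand) (M : Finset Cand) (m : Cand) : Prop :=
  m ∈ M ∧ ∀ b ∈ M, b ≠ m → v.lt b m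

namespace IsRankedLast

variable {v : LinearOrder Cand} {M : Finset Cand} {a b m : Cand}

theorem unique (hm : IsRankedLast v M m) (hb : IsRankedLast v M b) : m = b := by
  by_contra hne
  let := v
  exact lt_asymm (hb.2 m hm.1 hne) (hm.2 b hb.1 (Ne.symm hne))

theorem ne_of_lt (hm : IsRankedLast v M m) (ha : a ∈ M) (hb : b ∈ M) (hab : v.lt a b) :
    m ≠ a := by
  rintro rfl
  let := v
  exact lt_asymm hab (hm.2 b hb (ne_of_gt hab))

theorem of_pairwise_concat {l : List Cand} (hl : (l ++ [m]).Pairwise v.lt)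
    (hM : ∀ b ∈ M, b ∈ l ++ [m]) (hm : m ∈ M) : IsRankedLast v M m := by
  refine ⟨hm, fun b hb hne => ?_⟩
  have hbl : b ∈ l := by simpa [hne] using hM b hb
  exact hl.rel_of_mem_append hbl (List.mem_singleton_self m)

end IsRankedLast

theorem exists_isRankedLast (v : LinearOrder Cand) {M : Finset Cand} (hM : M.Nonempty) :
    ∃ m, IsRankedLast v M m := by
  let := v
  exact ⟨M.max' hM, M.max'_mem hM, fun b hb hne => lt_of_le_of_ne (M.le_max' b hb) hne⟩

theorem IsTopSegment.pairwise {v : LinearOrder Cand} {F : Finset Cand} {l : List Cand}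
    (h : IsTopSegment v F l) : l.Pairwise v.lt := by
  let := v
  exact List.isChain_iff_pairwise.1 h.2.1

theorem insert_union_sdiff_insert [DecidableEq Cand] {s : Cand} {B C : Finset Cand} (hs : s ∉ B)
    (hBC : Disjoint B C) : (insert s B ∪ C) \ insert s C = B := by
  rw [insert_union, ← union_insert, union_sdiff_right, sdiff_eq_self_of_disjoint]
  exact disjoint_insert_right.2 ⟨hs, hBC⟩

section VetoScore

variable [DecidableEq Cand] {t : ℕ} {F M : Finset Cand}

theorem vetoScore_le_length (V : List (LinearOrder Cand)) (c : Cand) :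
    vetoScore t F V c ≤ V.length := by
  have h := List.sum_le_card_nsmul
    (V.map fun v => if t ≤ #(F.filter fun b => v.lt c b) then 1 else 0) 1
    (by simp only [List.mem_map]; rintro _ ⟨v, -, rfl⟩; split <;> omega)
  rw [vetoScore]
  simpa using h

theorem mem_vetoWinners_of_vetoScore_eq_length {V : List (LinearOrder Cand)} {c : Cand}
    (hc : c ∈ F) (h : vetoScore t F V c = V.length) : c ∈ vetoWinners t F V :=
  mem_filter.2 ⟨hc, fun b _ => h ▸ vetoScore_le_length V b⟩

theorem vetoWinners_eq_of_forall_vetoScore {V : List (LinearOrder Cand)} {W : Finset Cand} {k : ℕ}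
    (hWF : W ⊆ F) (hW : W.Nonempty) (hWk : ∀ c ∈ W, vetoScore t F V c = k)
    (hlt : ∀ c ∈ F, c ∉ W → vetoScore t F V c < k) : vetoWinners t F V = W := by
  obtain ⟨w, hw⟩ := hW
  ext c
  simp only [vetoWinners, mem_filter]
  constructor
  · rintro ⟨hcF, hmax⟩
    by_contra hcW
    have := hmax w (hWF hw)
    rw [hWk w hw] at this
    exact absurd (hlt c hcF hcW) (not_lt.2 this)
  · intro hcW
    refine ⟨hWF hcW, fun b hbF => ?_⟩
    rw [hWk c hcW]
    by_cases hbW : b ∈ W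
    · exact (hWk b hbW).le
    · exact (hlt b hbF hbW).le

theorem le_card_filter_lt_iff {v : LinearOrder Cand} {m c : Cand} (hMF : M ⊆ F)
    (hcard : #(F \ M) + 1 = t) (hbelow : ∀ a ∈ F \ M, ∀ b ∈ M, v.lt b a)
    (hm : IsRankedLast v M m) (hc : c ∈ F) :
    t ≤ #(F.filter fun b => v.lt c b) ↔ c ∈ M ∧ c ≠ m := by
  let := v
  by_cases h : c ∈ M ∧ c ≠ m
  · rw [iff_true_intro h, iff_true]
    calc t = #(insert m (F \ M)) := by
          rw [card_insert_of_notMem (fun hm' => (mem_sdiff.1 hm').2 hm.1), hcard]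
      _ ≤ _ := by
          refine card_le_card fun b hb => mem_filter.2 ?_
          rcases mem_insert.1 hb with rfl | hb
          · exact ⟨hMF hm.1, hm.2 c h.1 h.2⟩
          · exact ⟨(mem_sdiff.1 hb).1, hbelow b hb c h.1⟩
  · rw [iff_false_intro h, iff_false, not_le]
    calc #(F.filter fun b => v.lt c b) ≤ #(F \ M) := by
          refine card_le_card fun b hb => ?_
          obtain ⟨hbF, hcb⟩ := mem_filter.1 hb
          refine mem_sdiff.2 ⟨hbF, fun hbM => ?_⟩
          by_cases hcM : c ∈ M
          · obtain rfl : c = m := by tauto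
            exact lt_asymm hcb (hm.2 b hbM (ne_of_gt hcb))
          · exact lt_asymm hcb (hbelow c (mem_sdiff.2 ⟨hc, hcM⟩) b hbM)
      _ < t := by omega

theorem exists_isRankedLast_vetoScore_eq {n : ℕ} {v : Fin n → LinearOrder Cand} (hMF : M ⊆ F)
    (hM : M.Nonempty) (hcard : #(F \ M) + 1 = t)
    (hbelow : ∀ j, ∀ a ∈ F \ M, ∀ b ∈ M, (v j).lt b a) :
    ∃ m : Fin n → Cand, (∀ j, IsRankedLast (v j) M (m j)) ∧
      ∀ c ∈ F, vetoScore t F ((List.finRange n).map v) c =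
        if c ∈ M then #{j | m j ≠ c} else 0 := by
  choose m hm using fun j => exists_isRankedLast (v j) hM
  refine ⟨m, hm, fun c hc => ?_⟩
  have hvote := fun j => le_card_filter_lt_iff hMF hcard (hbelow j) (hm j) hc
  rw [vetoScore, List.map_map, ← Fin.sum_univ_def]
  simp only [Function.comp_apply, hvote]
  split_ifs with hcM
  · simp only [hcM, true_and, ne_comm (a := c), card_filter]
  · simp [hcM]

theorem mem_vetoWinners_of_forall_exists_lt {n : ℕ} {v : Fin n → LinearOrder Cand}
    {m : Fin n → Cand} (hm : ∀ j, IsRankedLast (v j) M (m j))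
    (hscore : ∀ c ∈ F, vetoScore t F ((List.finRange n).map v) c =
      if c ∈ M then #{j | m j ≠ c} else 0)
    {a : Cand} (haF : a ∈ F) (haM : a ∈ M) (hab : ∀ j, ∃ b ∈ M, (v j).lt a b) :
    a ∈ vetoWinners t F ((List.finRange n).map v) := by
  refine mem_vetoWinners_of_vetoScore_eq_length haF ?_
  have hnever : ∀ j, m j ≠ a := fun j =>
    let ⟨_, hbM, hlt⟩ := hab j
    (hm j).ne_of_lt haM hbM hlt
  rw [hscore a haF, if_pos haM, filter_true_of_mem fun j _ => hnever j]
  simp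

end VetoScore

section Gadget

variable [DecidableEq Cand] {s x y z : Cand}

def gadgetBlock (s x y z : Cand) : Fin 5 → List Cand :=
  ![[s, x, y, z], [s, y, z, x], [s, z, x, y], [x, y, z, s], [x, y, z, s]]

theorem mem_gadgetBlock {c : Cand} (hc : c ∈ ({s, x, y, z} : Finset Cand)) (j : Fin 5) :
    c ∈ gadgetBlock s x y z j := by
  simp only [mem_insert, mem_singleton] at hc
  rcases hc with rfl | rfl | rfl | rfl <;> fin_cases j <;> simp [gadgetBlock]

theorem mem_gadgetBlock_append {A Ahat : Finset Cand} {la : List Cand}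
    (hla : la.toFinset = A \ {x, y, z}) (hAhat : Ahat ⊆ A) (j : Fin 5) {c : Cand}
    (hc : c ∈ insert s Ahat) : c ∈ gadgetBlock s x y z j ++ la := by
  by_cases hc4 : c ∈ ({s, x, y, z} : Finset Cand)
  · exact List.mem_append_left _ (mem_gadgetBlock hc4 j)
  · refine List.mem_append_right _ (List.mem_toFinset.1 ?_)
    rw [hla, mem_sdiff]
    simp only [mem_insert, mem_singleton, not_or] at hc hc4 ⊢
    exact ⟨hAhat (hc.resolve_left hc4.1), hc4.2⟩

variable {v : Fin 5 → LinearOrder Cand} {m : Fin 5 → Cand}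

theorem gadget_last_eq_self_iff {Ahat : Finset Cand}
    (hpair : ∀ j, (gadgetBlock s x y z j).Pairwise (v j).lt) (hAhat : Ahat ⊆ {x, y, z})
    (hne : Ahat.Nonempty) (hm : ∀ j, IsRankedLast (v j) (insert s Ahat) (m j)) (j : Fin 5) :
    m j = s ↔ 3 ≤ j := by
  obtain ⟨c, hc⟩ := hne
  have hsM : s ∈ insert s Ahat := mem_insert_self s Ahat
  have hcM : c ∈ insert s Ahat := mem_insert_of_mem hc
  have hMsub : ∀ b ∈ insert s Ahat, b ∈ [x, y, z] ++ [s] := fun b hb => by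
    have := insert_subset_insert s hAhat hb
    simp only [mem_insert, mem_singleton] at this
    simp only [List.cons_append, List.nil_append, List.mem_cons]
    tauto
  have hcxyz : c = x ∨ c = y ∨ c = z := by simpa using hAhat hc
  fin_cases j <;> simp only [Fin.reduceFinMk, Fin.isValue]
  iterate 3
    exact iff_of_false ((hm _).ne_of_lt hsM hcM (List.rel_of_pairwise_cons (hpair _)
      (by rcases hcxyz with rfl | rfl | rfl <;> simp))) (by decide)
  iterate 2
    exact iff_of_true ((hm _).unique
      (.of_pairwise_concat (l := [x, y, z]) (hpair _) hMsub hsM)) (by decide)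

theorem gadget_last_eq (hpair : ∀ j, (gadgetBlock s x y z j).Pairwise (v j).lt)
    (hm : ∀ j, IsRankedLast (v j) (insert s {x, y, z}) (m j)) : m = ![z, x, y, s, s] := by
  funext j
  fin_cases j
  · exact (hm 0).unique (.of_pairwise_concat (l := [s, x, y]) (hpair 0) (by simp) (by simp))
  · exact (hm 1).unique (.of_pairwise_concat (l := [s, y, z]) (hpair 1) (by simp) (by simp))
  · exact (hm 2).unique (.of_pairwise_concat (l := [s, z, x]) (hpair 2) (by simp) (by simp))
  · exact (hm 3).unique (.of_pairwise_concat (l := [x, y, z]) (hpair 3) (by simp) (by simp))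
  · exact (hm 4).unique (.of_pairwise_concat (l := [x, y, z]) (hpair 4) (by simp) (by simp))

variable {t : ℕ} {F : Finset Cand} {V : List (LinearOrder Cand)}

theorem gadget_eq_of_vetoWinners_eq {Ahat : Finset Cand}
    (hscore : ∀ c ∈ F, vetoScore t F V c = if c ∈ insert s Ahat then #{j | m j ≠ c} else 0)
    (hsF : s ∈ F) (hsAhat : s ∉ Ahat) (hm : ∀ j, m j ∈ insert s Ahat)
    (hms : ∀ j, m j = s ↔ 3 ≤ j) (hAhat : Ahat ⊆ {x, y, z}) (hwin : vetoWinners t F V = Ahat) :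
    Ahat = {x, y, z} := by
  set S : Finset (Fin 5) := {j | m j ≠ s}
  have hS : #S = 3 := by
    simp only [S, ne_eq, hms, not_le]
    decide
  obtain ⟨b, hbF, hsb⟩ : ∃ b ∈ F, vetoScore t F V s < vetoScore t F V b := by
    have : s ∉ vetoWinners t F V := hwin ▸ hsAhat
    simpa [vetoWinners, hsF] using this
  rw [hscore s hsF, if_pos (mem_insert_self s Ahat), hS] at hsb
  have hfiber : ∀ c ∈ Ahat, #{j | m j = c} ≤ 1 := by
    intro c hc
    have hcwin : c ∈ vetoWinners t F V := hwin ▸ hc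
    have hbc := (mem_filter.1 hcwin).2 b hbF
    rw [hscore c (mem_filter.1 hcwin).1, if_pos (mem_insert_of_mem hc)] at hbc
    have hsplit := card_filter_add_card_filter_not (s := univ) (fun j => m j = c)
    simp only [card_univ, Fintype.card_fin, ← ne_eq] at hsplit
    omega
  have hmaps : Set.MapsTo m S Ahat := fun j hj =>
    (mem_insert.1 (hm j)).resolve_left (mem_filter.1 hj).2
  have hinj : Set.InjOn m S := fun j hj j' _ hjj' =>
    card_le_one.1 (hfiber (m j) (hmaps hj)) j (by simp) j' (by simp [hjj'])
  exact eq_of_subset_of_card_le hAhat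
    (card_le_three.trans (hS ▸ card_le_card_of_injOn m hmaps hinj))

theorem gadget_card_filter_last_ne (hdist : ([s, x, y, z] : List Cand).Nodup) :
    #{j | ![z, x, y, s, s] j ≠ x} = 4 ∧ #{j | ![z, x, y, s, s] j ≠ y} = 4 ∧
      #{j | ![z, x, y, s, s] j ≠ z} = 4 ∧ #{j | ![z, x, y, s, s] j ≠ s} = 3 := by
  obtain ⟨⟨hsx, hsy, hsz⟩, ⟨hxy, hxz⟩, hyz⟩ :
      (s ≠ x ∧ s ≠ y ∧ s ≠ z) ∧ (x ≠ y ∧ x ≠ z) ∧ y ≠ z := by simpa using hdist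
  simp [card_filter, Fin.sum_univ_five, hsx, hsy, hsz, hxy, hxz, hyz, hsx.symm, hsy.symm, hsz.symm,
    hxy.symm, hxz.symm, hyz.symm]

theorem gadget_vetoWinners_eq (hdist : ([s, x, y, z] : List Cand).Nodup)
    (hscore : ∀ c ∈ F, vetoScore t F V c =
      if c ∈ (insert s {x, y, z} : Finset Cand) then #{j | ![z, x, y, s, s] j ≠ c} else 0)
    (hxyzF : ({x, y, z} : Finset Cand) ⊆ F) : vetoWinners t F V = {x, y, z} := by
  obtain ⟨hx, hy, hz, hs⟩ := gadget_card_filter_last_ne hdist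
  refine vetoWinners_eq_of_forall_vetoScore (k := 4) hxyzF (insert_nonempty _ _) ?_ ?_
  · intro c hc
    rw [hscore c (hxyzF hc), if_pos (mem_insert_of_mem hc)]
    simp only [mem_insert, mem_singleton] at hc
    rcases hc with rfl | rfl | rfl <;> assumption
  · intro c hcF hc
    rw [hscore c hcF]
    split_ifs with hcM
    · obtain rfl : c = s := by simpa [hc] using hcM
      omega
    · omega

end Gadget

theorem t_veto_district_gadget_general [DecidableEq Cand]
    (t : ℕ) (ht : 1 ≤ t)
    (s x y z : Cand) (hdist : ([s, x, y, z] : List Cand).Nodup)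
    (α : Finset Cand)
    (hαcard : α.card = t - 1)
    (hαs : Disjoint α ({s, x, y, z} : Finset Cand))
    (A : Finset Cand)
    (hAC : Disjoint A (insert s α))
    (v : Fin 5 → LinearOrder Cand)
    (hv : ∃ la' lα : List Cand,
      la'.toFinset = A \ ({x, y, z} : Finset Cand) ∧
      la'.length = (A \ ({x, y, z} : Finset Cand)).card ∧
      lα.toFinset = α ∧ lα.length = t - 1 ∧
      ∀ j : Fin 5,
        IsTopSegment (v j) (insert s α ∪ A)
          ((![[s, x, y, z], [s, y, z, x], [s, z, x, y], [x, y, z, s],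
              [x, y, z, s]] : Fin 5 → List Cand) j ++ la' ++ lα)) :
    ∀ Ahat ⊆ A, Ahat.Nonempty →
      (vetoWinners t (insert s α ∪ Ahat) ((List.finRange 5).map v) = Ahat ↔
        Ahat = ({x, y, z} : Finset Cand)) := by
  obtain ⟨la, lα, hla, -, hlα, -, htop⟩ := hv
  intro Ahat hAhatA hne
  have hpair : ∀ j, ((gadgetBlock s x y z j ++ la) ++ lα).Pairwise (v j).lt :=
    fun j => (htop j).pairwise
  have hsAhat : s ∉ Ahat := fun hs => (disjoint_insert_right.1 hAC).1 (hAhatA hs)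
  have hsF : s ∈ insert s α ∪ Ahat := mem_union_left _ (mem_insert_self s α)
  have hFM : (insert s α ∪ Ahat) \ insert s Ahat = α :=
    insert_union_sdiff_insert (fun hs => disjoint_left.1 hαs hs (mem_insert_self s _))
      (disjoint_of_subset_right hAhatA (disjoint_insert_right.1 hAC).2.symm)
  obtain ⟨m, hm, hscore⟩ := exists_isRankedLast_vetoScore_eq (t := t)
    (insert_subset hsF subset_union_right) (insert_nonempty s Ahat) (by rw [hFM]; omega)
    fun j a ha b hb => (hpair j).rel_of_mem_append (mem_gadgetBlock_append hla hAhatA j hb)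
      (by rwa [hFM, ← hlα, List.mem_toFinset] at ha)
  by_cases hxyz : Ahat ⊆ {x, y, z}
  · have hblock : ∀ j, (gadgetBlock s x y z j).Pairwise (v j).lt := fun j =>
      (List.pairwise_append.1 (List.pairwise_append.1 (hpair j)).1).1
    refine ⟨gadget_eq_of_vetoWinners_eq hscore hsF hsAhat (fun j => (hm j).1)
      (gadget_last_eq_self_iff hblock hxyz hne hm) hxyz, ?_⟩
    rintro rfl
    rw [gadget_last_eq hblock hm] at hscore
    exact gadget_vetoWinners_eq hdist hscore subset_union_right
  · obtain ⟨w, hw, hwxyz⟩ := not_subset.1 hxyz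
    have hwla : w ∈ la := List.mem_toFinset.1 (hla ▸ mem_sdiff.2 ⟨hAhatA hw, hwxyz⟩)
    have hs := mem_vetoWinners_of_forall_exists_lt hm hscore hsF (mem_insert_self s Ahat)
      fun j => ⟨w, mem_insert_of_mem hw, (List.pairwise_append.1 (hpair j)).1.rel_of_mem_append
        (mem_gadgetBlock (mem_insert_self s _) j) hwla⟩
    exact iff_of_false (fun h => hsAhat (h ▸ hs)) (fun h => hwxyz (h ▸ hw))

/-- Lemma 4, district gadget for `t`-veto, Theorem 6: with `C = {s} ∪ α`
(`|α| = t − 1`) and the five votes each ordering `C ∪ A` as a top block of four candidates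
(`s,x,y,z`; `s,y,z,x`; `s,z,x,y`; `x,y,z,s`; `x,y,z,s`, respectively) followed by the
members of `A' = A ∖ {x, y, z}` in one fixed order and then the members of `α` in one fixed
order at the bottom, a nonempty set `Ahat ⊆ A` satisfies that the `t`-veto winner set of
`(C ∪ Ahat, V)` equals `Ahat` if and only if `Ahat = {x, y, z}`. -/
theorem t_veto_district_gadget [DecidableEq Cand]
    (t : ℕ) (ht : 1 ≤ t)
    (s x y z : Cand) (hdist : ([s, x, y, z] : List Cand).Nodup)
    (α : Finset Cand)
    (hαcard : α.card = t - 1)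
    (hαs : Disjoint α ({s, x, y, z} : Finset Cand))
    (A : Finset Cand) (hxyzA : ({x, y, z} : Finset Cand) ⊆ A)
    (hAC : Disjoint A (insert s α))
    (v : Fin 5 → LinearOrder Cand)
    (hv : ∃ la' lα : List Cand,
      la'.toFinset = A \ ({x, y, z} : Finset Cand) ∧
      la'.length = (A \ ({x, y, z} : Finset Cand)).card ∧
      lα.toFinset = α ∧ lα.length = t - 1 ∧
      ∀ j : Fin 5,
        IsTopSegment (v j) (insert s α ∪ A)
          ((![[s, x, y, z], [s, y, z, x], [s, z, x, y], [x, y, z, s],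
              [x, y, z, s]] : Fin 5 → List Cand) j ++ la' ++ lα)) :
    ∀ Ahat ⊆ A, Ahat.Nonempty →
      (vetoWinners t (insert s α ∪ Ahat) ((List.finRange 5).map v) = Ahat ↔
        Ahat = ({x, y, z} : Finset Cand)) :=
  t_veto_district_gadget_general t ht s x y z hdist α hαcard hαs A hAC v hv
end
end
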